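/- arXiv:0911.3881 — 10 statements merged into one kernel-verified Lean document; each statement's English description precedes it below -/
import Mathlib

section
/- Let F(x,y) ∈ ℤ[x,y] be a homogeneous binary form of degree d that is not divisible by the square of any nonunit of ℤ[x,y]. If p is a prime with p ≥ d, then there exist integers m, n such that F(m,n) ≢ 0 (mod p²); equivalently, ρ(p²) < p⁴. -/
open MvPolynomial

/-- `ρ(k)`: the number of pairs `(m,n)` with `0 ≤ m, n ≤ k-1` and `F(m,n) ≡ 0 (mod k)`. -/
noncomputable def rhoF (F : MvPolynomial (Fin 2) ℤ) (k : ℕ) : ℕ :=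
  ((Finset.range k ×ˢ Finset.range k).filter
    (fun p => (k : ℤ) ∣ MvPolynomial.eval ![(p.1 : ℤ), (p.2 : ℤ)] F)).card

/-- Casting an evaluation of an integer polynomial into `ZMod k`. -/
lemma cast_eval_eq (k : ℕ) (F : MvPolynomial (Fin 2) ℤ) (m n : ℤ) :
    ((MvPolynomial.eval ![m, n] F : ℤ) : ZMod k)
      = MvPolynomial.eval ![(m : ZMod k), (n : ZMod k)]
          (MvPolynomial.map (Int.castRingHom (ZMod k)) F) := by
  rw [eval_map]
  have h := eval₂_comp_left (Int.castRingHom (ZMod k)) (RingHom.id ℤ) ![m, n] F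
  simp only [RingHom.comp_id] at h
  rw [show ((MvPolynomial.eval ![m, n] F : ℤ) : ZMod k)
      = (Int.castRingHom (ZMod k)) (eval₂ (RingHom.id ℤ) ![m, n] F) from rfl, h]
  congr 1
  funext i
  fin_cases i <;> simp

/-- If a nonzero homogeneous form over `ZMod p` has degree `≤ p`, it has a nonzero value. -/
lemma exists_eval_ne_zero_zmod (p : ℕ) (hp : p.Prime) (d : ℕ) (hd : d ≤ p)
    (G : MvPolynomial (Fin 2) (ZMod p)) (hG : G.IsHomogeneous d) (hG0 : G ≠ 0) :
    ∃ a b : ZMod p, MvPolynomial.eval ![a, b] G ≠ 0 := by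
  haveI : Fact p.Prime := ⟨hp⟩
  by_contra h
  push_neg at h
  apply hG0
  apply hG.eq_zero_of_forall_eval_eq_zero_of_le_card
  · intro r
    have : r = ![r 0, r 1] := by
      funext i; fin_cases i <;> simp
    rw [this]
    exact h (r 0) (r 1)
  · have : Cardinal.mk (ZMod p) = p := by
      rw [Cardinal.mk_fintype, ZMod.card]
    rw [this]
    exact_mod_cast hd

theorem exists_not_sq_dvd_of_prime_ge_deg
    (d : ℕ) (F : MvPolynomial (Fin 2) ℤ) (hF : F.IsHomogeneous d)
    (hsqfree : ∀ g : MvPolynomial (Fin 2) ℤ, ¬ IsUnit g → ¬ (g^2 ∣ F))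
    (p : ℕ) (hp : p.Prime) (hpd : d ≤ p) :
    (∃ m n : ℤ, ¬ ((p : ℤ)^2 ∣ MvPolynomial.eval ![m, n] F)) ∧ rhoF F (p^2) < p^4 := by
  haveI : Fact p.Prime := ⟨hp⟩
  have hpz : (p : ℤ) ≠ 0 := by exact_mod_cast hp.ne_zero
  have hCp : ¬ IsUnit (MvPolynomial.C (p : ℤ) : MvPolynomial (Fin 2) ℤ) := by
    intro h
    have := h.map (MvPolynomial.constantCoeff)
    simp only [constantCoeff_C] at this
    rw [Int.isUnit_iff] at this
    have h2 := hp.two_le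
    omega
  have key : ∃ m n : ℤ, ¬ ((p : ℤ)^2 ∣ MvPolynomial.eval ![m, n] F) := by
    set φ : ℤ →+* ZMod p := Int.castRingHom (ZMod p) with hφ
    by_cases hmap : MvPolynomial.map φ F = 0
    · -- all coefficients divisible by p
      have hdvd : MvPolynomial.C (p : ℤ) ∣ F := by
        rw [C_dvd_iff_dvd_coeff]
        intro i
        have := congrArg (MvPolynomial.coeff i) hmap
        rw [coeff_map, coeff_zero] at this
        exact_mod_cast (ZMod.intCast_zmod_eq_zero_iff_dvd _ p).mp this
      obtain ⟨G, rfl⟩ := hdvd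
      have hGmap : MvPolynomial.map φ G ≠ 0 := by
        intro h
        have hdvd2 : MvPolynomial.C (p : ℤ) ∣ G := by
          rw [C_dvd_iff_dvd_coeff]
          intro i
          have := congrArg (MvPolynomial.coeff i) h
          rw [coeff_map, coeff_zero] at this
          exact_mod_cast (ZMod.intCast_zmod_eq_zero_iff_dvd _ p).mp this
        exact hsqfree _ hCp (by rw [sq]; exact mul_dvd_mul_left _ hdvd2)
      have hGhom : G.IsHomogeneous d := by
        intro m hm
        apply hF
        rw [coeff_C_mul]
        exact mul_ne_zero hpz hm
      obtain ⟨a, b, hab⟩ := exists_eval_ne_zero_zmod p hp d hpd _ (hGhom.map φ) hGmap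
      refine ⟨(a.val : ℤ), (b.val : ℤ), ?_⟩
      have hcast : ((MvPolynomial.eval ![(a.val : ℤ), (b.val : ℤ)] G : ℤ) : ZMod p) ≠ 0 := by
        rw [cast_eval_eq]
        have ha : (((a.val : ℤ)) : ZMod p) = a := by push_cast; simp [ZMod.natCast_val]
        have hb : (((b.val : ℤ)) : ZMod p) = b := by push_cast; simp [ZMod.natCast_val]
        rw [ha, hb]
        exact hab
      have hpG : ¬ ((p : ℤ) ∣ MvPolynomial.eval ![(a.val : ℤ), (b.val : ℤ)] G) := by
        rw [← ZMod.intCast_zmod_eq_zero_iff_dvd]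
        exact hcast
      intro hdvd
      apply hpG
      rw [map_mul, eval_C, sq] at hdvd
      exact (mul_dvd_mul_iff_left hpz).mp hdvd
    · obtain ⟨a, b, hab⟩ := exists_eval_ne_zero_zmod p hp d hpd _ (hF.map φ) hmap
      refine ⟨(a.val : ℤ), (b.val : ℤ), ?_⟩
      have hcast : ((MvPolynomial.eval ![(a.val : ℤ), (b.val : ℤ)] F : ℤ) : ZMod p) ≠ 0 := by
        rw [cast_eval_eq]
        have ha : (((a.val : ℤ)) : ZMod p) = a := by push_cast; simp [ZMod.natCast_val]
        have hb : (((b.val : ℤ)) : ZMod p) = b := by push_cast; simp [ZMod.natCast_val]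
        rw [ha, hb]
        exact hab
      intro hdvd
      apply hcast
      rw [ZMod.intCast_zmod_eq_zero_iff_dvd]
      exact dvd_trans (dvd_pow_self _ two_ne_zero) hdvd
  refine ⟨key, ?_⟩
  obtain ⟨m, n, hmn⟩ := key
  set k : ℕ := p ^ 2 with hk
  have hk0 : 0 < (k : ℤ) := by rw [hk]; exact_mod_cast pow_pos hp.pos 2
  have hkd : ¬ ((k : ℤ) ∣ MvPolynomial.eval ![m, n] F) := by
    rw [hk]; push_cast; exact hmn
  set m' : ℕ := (m % k).toNat with hm'
  set n' : ℕ := (n % k).toNat with hn'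
  have hm'' : ((m' : ℤ) : ZMod k) = (m : ZMod k) := by
    rw [hm', Int.toNat_of_nonneg (Int.emod_nonneg m hk0.ne')]
    rw [ZMod.intCast_eq_intCast_iff]
    exact Int.emod_emod_of_dvd m dvd_rfl
  have hn'' : ((n' : ℤ) : ZMod k) = (n : ZMod k) := by
    rw [hn', Int.toNat_of_nonneg (Int.emod_nonneg n hk0.ne')]
    rw [ZMod.intCast_eq_intCast_iff]
    exact Int.emod_emod_of_dvd n dvd_rfl
  have hmem : (m', n') ∈ Finset.range k ×ˢ Finset.range k := by
    rw [Finset.mem_product, Finset.mem_range, Finset.mem_range]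
    constructor
    · have := Int.emod_lt_of_pos m hk0
      omega
    · have := Int.emod_lt_of_pos n hk0
      omega
  have hnotdvd : ¬ ((k : ℤ) ∣ MvPolynomial.eval ![(m' : ℤ), (n' : ℤ)] F) := by
    intro hdvd
    apply hkd
    rw [← ZMod.intCast_zmod_eq_zero_iff_dvd] at hdvd ⊢
    rw [cast_eval_eq] at hdvd ⊢
    rw [hm'', hn''] at hdvd
    exact hdvd
  have hss : ((Finset.range k ×ˢ Finset.range k).filter
      (fun q => (k : ℤ) ∣ MvPolynomial.eval ![(q.1 : ℤ), (q.2 : ℤ)] F))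
      ⊂ Finset.range k ×ˢ Finset.range k :=
    Finset.filter_ssubset.mpr ⟨(m', n'), hmem, hnotdvd⟩
  have := Finset.card_lt_card hss
  rw [Finset.card_product, Finset.card_range] at this
  calc rhoF F (p ^ 2) < k * k := this
    _ = p ^ 4 := by rw [hk]; ring
end

section
/- Let F(x,y) ∈ ℤ[x,y] be a nonzero homogeneous binary form and let p be a prime that does not divide the content of F. If p is a fixed prime divisor of F, i.e., p divides F(a,b) for all integers a, b, then p + 1 ≤ deg F. -/
open MvPolynomial

theorem fixed_prime_divisor_le_deg
    (d : ℕ) (F : MvPolynomial (Fin 2) ℤ) (hF0 : F ≠ 0) (hF : F.IsHomogeneous d)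
    (p : ℕ) (hp : p.Prime)
    (hcontent : ¬ (∀ m : Fin 2 →₀ ℕ, (p : ℤ) ∣ F.coeff m))
    (hfixed : ∀ a b : ℤ, (p : ℤ) ∣ MvPolynomial.eval ![a, b] F) :
    p + 1 ≤ d := by
  classical
  haveI : Fact p.Prime := ⟨hp⟩
  set φ : ℤ →+* ZMod p := Int.castRingHom (ZMod p) with hφ
  set F' : MvPolynomial (Fin 2) (ZMod p) := MvPolynomial.map φ F with hF'def
  -- degrees of monomials in the support
  have hdeg : ∀ m : Fin 2 →₀ ℕ, F'.coeff m ≠ 0 → m 0 + m 1 = d := by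
    intro m hm
    have h2 : F.coeff m ≠ 0 := by
      intro h
      apply hm
      rw [hF'def, MvPolynomial.coeff_map, h, map_zero]
    have h3 := hF h2
    rw [← h3]
    simp [Finsupp.weight_apply, Finsupp.sum_fintype, Fin.sum_univ_two]
  -- F' vanishes everywhere
  have hvanish : ∀ a b : ZMod p, MvPolynomial.eval ![a, b] F' = 0 := by
    intro a b
    obtain ⟨a', rfl⟩ := ZMod.intCast_surjective a
    obtain ⟨b', rfl⟩ := ZMod.intCast_surjective b
    have := hfixed a' b'
    have hz : φ (MvPolynomial.eval ![a', b'] F) = 0 := by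
      rw [hφ]
      simpa [ZMod.intCast_zmod_eq_zero_iff_dvd] using
        (ZMod.intCast_zmod_eq_zero_iff_dvd _ p).2 this
    rw [hF'def, MvPolynomial.eval_map]
    rw [show ((![((a' : ℤ) : ZMod p), ((b' : ℤ) : ZMod p)]) : Fin 2 → ZMod p)
        = ⇑φ ∘ ![a', b'] by
      funext i; fin_cases i <;> simp [hφ]]
    have hc := MvPolynomial.eval₂_comp_left φ (RingHom.id ℤ) ![a', b'] F
    simp only [MvPolynomial.eval₂_id, RingHom.comp_id] at hc
    rw [← hc]
    exact hz
  -- the one-variable specialization G(t) = F'(t,1)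
  set G : Polynomial (ZMod p) :=
    MvPolynomial.eval₂ Polynomial.C ![Polynomial.X, (1 : Polynomial (ZMod p))] F' with hGdef
  have hGsum : G = ∑ m ∈ F'.support,
      Polynomial.C (F'.coeff m) * Polynomial.X ^ (m 0) := by
    rw [hGdef, MvPolynomial.eval₂_eq']
    refine Finset.sum_congr rfl fun m _ => ?_
    rw [Fin.prod_univ_two]
    simp
  have hGcoeff : ∀ i : ℕ, G.coeff i
      = ∑ m ∈ F'.support, if m 0 = i then F'.coeff m else 0 := by
    intro i
    rw [hGsum, Polynomial.finset_sum_coeff]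
    refine Finset.sum_congr rfl fun m _ => ?_
    rw [Polynomial.coeff_C_mul, Polynomial.coeff_X_pow]
    by_cases h : m 0 = i
    · simp [h]
    · simp only [eq_comm (a := i), h, if_false, mul_zero]
  -- uniqueness of monomials with given x-exponent
  have huniq : ∀ m m' : Fin 2 →₀ ℕ, F'.coeff m ≠ 0 → F'.coeff m' ≠ 0 →
      m 0 = m' 0 → m = m' := by
    intro m m' hm hm' h0
    have h1 := hdeg m hm
    have h2 := hdeg m' hm'
    ext i
    fin_cases i
    · exact h0
    · show m 1 = m' 1
      omega
  -- coeff extraction for monomials in the support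
  have hGcoeff' : ∀ m₀ : Fin 2 →₀ ℕ, F'.coeff m₀ ≠ 0 → G.coeff (m₀ 0) = F'.coeff m₀ := by
    intro m₀ hm₀
    rw [hGcoeff]
    rw [Finset.sum_eq_single m₀]
    · simp
    · intro m hm hne
      rw [MvPolynomial.mem_support_iff] at hm
      have : m 0 ≠ m₀ 0 := fun h => hne (huniq m m₀ hm hm₀ h)
      simp [this]
    · intro h
      exact absurd (MvPolynomial.mem_support_iff.2 hm₀) h
  -- G is nonzero
  obtain ⟨m₀, hm₀⟩ := not_forall.1 hcontent
  have hm₀' : F'.coeff m₀ ≠ 0 := by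
    rw [hF'def, MvPolynomial.coeff_map]
    simpa [hφ, ZMod.intCast_zmod_eq_zero_iff_dvd] using hm₀
  have hG0 : G ≠ 0 := fun h => hm₀' (by rw [← hGcoeff' m₀ hm₀', h, Polynomial.coeff_zero])
  -- the top coefficient of F' vanishes: it equals F'(1,0) = 0
  have htop : F'.coeff (Finsupp.single 0 d) = 0 := by
    have h10 := hvanish 1 0
    rw [MvPolynomial.eval_eq'] at h10
    rw [Finset.sum_eq_single (Finsupp.single (0 : Fin 2) d)] at h10
    · rw [Fin.prod_univ_two] at h10
      simpa [Finsupp.single_apply] using h10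
    · intro m hm hne
      rw [MvPolynomial.mem_support_iff] at hm
      have h1 : m 1 ≠ 0 := by
        intro h1
        apply hne
        have := hdeg m hm
        ext i
        fin_cases i <;> simp_all [Finsupp.single_apply]
      rw [Fin.prod_univ_two]
      simp [h1]
    · intro h
      rw [MvPolynomial.notMem_support_iff] at h
      simp [h]
  -- all coefficients of G of index ≥ d vanish
  have hGhigh : ∀ i : ℕ, d ≤ i → G.coeff i = 0 := by
    intro i hi
    rw [hGcoeff]
    refine Finset.sum_eq_zero fun m hm => ?_
    rw [MvPolynomial.mem_support_iff] at hm
    have h1 := hdeg m hm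
    by_cases h : m 0 = i
    · -- forces i = d, m = single 0 d
      have hid : i = d := by omega
      have hmeq : m = Finsupp.single (0 : Fin 2) d := by
        ext j
        fin_cases j <;> simp_all [Finsupp.single_apply] <;> omega
      rw [hmeq] at hm
      exact absurd htop hm
    · simp [h]
  -- so natDegree G < d
  have hnd : G.natDegree < d := by
    by_contra h
    exact Polynomial.leadingCoeff_ne_zero.2 hG0 (hGhigh _ (le_of_not_gt h))
  -- G has all of ZMod p as roots, so p ≤ natDegree G
  have hroots : ∀ c : ZMod p, G.eval c = 0 := by
    intro c
    have hc := MvPolynomial.eval₂_comp_left (Polynomial.evalRingHom c)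
      (Polynomial.C : ZMod p →+* Polynomial (ZMod p))
      ![Polynomial.X, (1 : Polynomial (ZMod p))] F'
    have he : (Polynomial.evalRingHom c).comp (Polynomial.C : ZMod p →+* Polynomial (ZMod p))
        = RingHom.id (ZMod p) := by
      ext x
      simp
    have hv : (⇑(Polynomial.evalRingHom c)) ∘ ![Polynomial.X, (1 : Polynomial (ZMod p))]
        = ![c, 1] := by
      funext i
      fin_cases i <;> simp
    rw [he, hv] at hc
    have := hvanish c 1
    rw [MvPolynomial.eval₂_id] at hc
    calc G.eval c = (Polynomial.evalRingHom c) G := rfl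
    _ = MvPolynomial.eval ![c, 1] F' := hc
    _ = 0 := hvanish c 1
  have hple : p ≤ G.natDegree := by
    by_contra h
    apply hG0
    apply Polynomial.eq_zero_of_natDegree_lt_card_of_eval_eq_zero G
      (Function.injective_id (α := ZMod p)) (fun c => hroots c)
    simpa [ZMod.card] using lt_of_not_ge h
  omega
end

section
/- Let A, B be nonzero integers with gcd(A,B) = 1. Suppose that for every monic irreducible factor g(t) ∈ ℚ[t] of the polynomial A·t⁶ + B, the field ℚ[t]/(g(t)) contains an element x satisfying x² + x + 1 = 0. Then 3A/B is the square of a rational number. -/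
open Polynomial

open IntermediateField in
/-- Every element of `ℚ(α)` with `α = t·i` (`t` real) can be written `u + v·α`
with `u, v` in a subfield `E` containing `α²` and consisting of reals. -/
lemma quadratic_decomp_aux (E : IntermediateField ℚ ℂ) (t : ℝ) (ht : 0 < t) (α : ℂ)
    (hα : α = (t : ℂ) * Complex.I) (hα2 : α ^ 2 ∈ E)
    (hEreal : ∀ x ∈ E, (starRingEnd ℂ) x = x)
    {z : ℂ} (hz : z ∈ IntermediateField.adjoin ℚ {α}) :
    ∃ u ∈ E, ∃ v ∈ E, z = u + v * α := by
  let Salg : Subalgebra ℚ ℂ :=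
    { carrier := {z | ∃ u ∈ E, ∃ v ∈ E, z = u + v * α}
      zero_mem' := ⟨0, E.zero_mem, 0, E.zero_mem, by ring⟩
      one_mem' := ⟨1, E.one_mem, 0, E.zero_mem, by ring⟩
      add_mem' := by
        rintro x y ⟨u, hu, v, hv, rfl⟩ ⟨u', hu', v', hv', rfl⟩
        exact ⟨u + u', E.add_mem hu hu', v + v', E.add_mem hv hv', by ring⟩
      mul_mem' := by
        rintro x y ⟨u, hu, v, hv, rfl⟩ ⟨u', hu', v', hv', rfl⟩
        exact ⟨u * u' + v * v' * α ^ 2,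
          E.add_mem (E.mul_mem hu hu') (E.mul_mem (E.mul_mem hv hv') hα2),
          u * v' + v * u', E.add_mem (E.mul_mem hu hv') (E.mul_mem hv hu'), by ring⟩
      algebraMap_mem' := fun q =>
        ⟨algebraMap ℚ ℂ q, E.algebraMap_mem q, 0, E.zero_mem, by ring⟩ }
  have hinv : ∀ x ∈ Salg, x⁻¹ ∈ Salg := by
    rintro x ⟨u, hu, v, hv, rfl⟩
    rcases eq_or_ne (u + v * α) 0 with h0 | h0
    · rw [h0]
      exact ⟨0, E.zero_mem, 0, E.zero_mem, by simp⟩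
    · obtain ⟨a, ha⟩ := Complex.conj_eq_iff_real.mp (hEreal u hu)
      obtain ⟨b, hb⟩ := Complex.conj_eq_iff_real.mp (hEreal v hv)
      set N : ℝ := a ^ 2 + t ^ 2 * b ^ 2 with hN
      have hNne : N ≠ 0 := by
        intro h
        have ha2 : a ^ 2 = 0 := by nlinarith [sq_nonneg a, sq_nonneg (t * b)]
        have hb2 : b ^ 2 = 0 := by
          have ht2 : 0 < t ^ 2 := by positivity
          nlinarith [sq_nonneg b]
        have ha0 : a = 0 := by
          have := pow_eq_zero_iff (n := 2) (by norm_num) |>.mp ha2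
          exact this
        have hb0 : b = 0 := pow_eq_zero_iff (n := 2) (by norm_num) |>.mp hb2
        apply h0
        rw [ha, hb, ha0, hb0]
        simp
      have hNcne : ((N : ℝ) : ℂ) ≠ 0 := Complex.ofReal_ne_zero.mpr hNne
      have hNmem : ((N : ℝ) : ℂ) ∈ E := by
        have : ((N : ℝ) : ℂ) = u * u - v * v * α ^ 2 := by
          rw [ha, hb, hα, hN]
          push_cast
          linear_combination ((b : ℂ) ^ 2 * (t : ℂ) ^ 2) * Complex.I_sq
        rw [this]
        exact E.sub_mem (E.mul_mem hu hu) (E.mul_mem (E.mul_mem hv hv) hα2)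
      have hmul : (u + v * α) * ((u - v * α) * (((N : ℝ) : ℂ))⁻¹) = 1 := by
        have h2 : (u + v * α) * (u - v * α) = ((N : ℝ) : ℂ) := by
          rw [ha, hb, hα, hN]
          push_cast
          linear_combination (-(b : ℂ) ^ 2 * (t : ℂ) ^ 2) * Complex.I_sq
        rw [← mul_assoc, h2, mul_inv_cancel₀ hNcne]
      refine ⟨u * (((N : ℝ) : ℂ))⁻¹, E.mul_mem hu (E.inv_mem hNmem),
        -(v * (((N : ℝ) : ℂ))⁻¹), E.neg_mem (E.mul_mem hv (E.inv_mem hNmem)), ?_⟩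
      rw [inv_eq_of_mul_eq_one_right hmul]
      ring
  have hle : IntermediateField.adjoin ℚ {α} ≤ Salg.toIntermediateField hinv := by
    rw [IntermediateField.adjoin_le_iff]
    intro x hx
    rcases hx with rfl
    exact ⟨0, E.zero_mem, 1, E.one_mem, by ring⟩
  exact hle hz

open IntermediateField in
theorem three_A_div_B_is_square_of_mu3_in_all_factors
    (A B : ℤ) (hA : A ≠ 0) (hB : B ≠ 0) (hAB : Int.gcd A B = 1)
    (hfac : ∀ g : Polynomial ℚ, g.Monic → Irreducible g →
      g ∣ (Polynomial.C (A : ℚ) * Polynomial.X ^ 6 + Polynomial.C (B : ℚ)) →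
      ∃ x : AdjoinRoot g, x ^ 2 + x + 1 = 0) :
    ∃ r : ℚ, 3 * (A : ℚ) / (B : ℚ) = r ^ 2 := by
  have hA' : (A : ℚ) ≠ 0 := Int.cast_ne_zero.mpr hA
  have hB' : (B : ℚ) ≠ 0 := Int.cast_ne_zero.mpr hB
  set d : ℚ := (B : ℚ) / (A : ℚ) with hd
  have hd0 : d ≠ 0 := div_ne_zero hB' hA'
  set P : ℚ[X] := C (A : ℚ) * X ^ 6 + C (B : ℚ) with hP
  suffices h : ∃ r : ℚ, 3 / d = r ^ 2 by
    obtain ⟨r, hr⟩ := h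
    refine ⟨r, ?_⟩
    rw [← hr, hd]
    field_simp
  rcases lt_or_gt_of_ne hd0 with hneg | hpos
  · -- d < 0 : the polynomial has a real root, contradiction with hfac
    exfalso
    have hd_neg : (d : ℝ) < 0 := by exact_mod_cast hneg
    set ρ : ℝ := (-(d : ℝ)) ^ ((6 : ℝ)⁻¹) with hρ
    have hρ6 : ρ ^ (6 : ℕ) = -(d : ℝ) := by
      rw [hρ, ← Real.rpow_natCast ((-(d : ℝ)) ^ ((6 : ℝ)⁻¹)) 6,
        ← Real.rpow_mul (by linarith)]
      norm_num
    have hroot : aeval ρ P = 0 := by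
      rw [hP]
      simp only [map_add, map_mul, map_pow, aeval_X, aeval_C]
      have hmapA : algebraMap ℚ ℝ (A : ℚ) = (A : ℝ) := by norm_cast
      have hmapB : algebraMap ℚ ℝ (B : ℚ) = (B : ℝ) := by norm_cast
      rw [hmapA, hmapB, hρ6]
      have hAd : (A : ℚ) * d = (B : ℚ) := by rw [hd]; field_simp
      have hAdR : (A : ℝ) * (d : ℝ) = (B : ℝ) := by exact_mod_cast hAd
      linear_combination -hAdR
    have hint : IsIntegral ℚ ρ := by
      refine ⟨X ^ 6 + C d, monic_X_pow_add_C d (by norm_num), ?_⟩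
      rw [← aeval_def]
      simp only [map_add, map_pow, aeval_X, aeval_C]
      have : algebraMap ℚ ℝ d = (d : ℝ) := by norm_cast
      rw [this, hρ6]
      ring
    obtain ⟨x, hx⟩ := hfac (minpoly ℚ ρ) (minpoly.monic hint) (minpoly.irreducible hint)
      (minpoly.dvd ℚ ρ hroot)
    have h0 : (minpoly ℚ ρ).eval₂ (algebraMap ℚ ℝ) ρ = 0 := by
      rw [← aeval_def]; exact minpoly.aeval ℚ ρ
    set φ := AdjoinRoot.lift (algebraMap ℚ ℝ) ρ h0 with hφ
    have hy := congrArg φ hx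
    simp only [map_add, map_pow, map_one, map_zero] at hy
    nlinarith [sq_nonneg (φ x + 1 / 2)]
  · -- d > 0 : main case
    have hdR : (0 : ℝ) < (d : ℝ) := by exact_mod_cast hpos
    set t6 : ℝ := (d : ℝ) ^ ((6 : ℝ)⁻¹) with ht6
    have ht6pos : 0 < t6 := Real.rpow_pos_of_pos hdR _
    have h6 : t6 ^ (6 : ℕ) = (d : ℝ) := by
      rw [ht6, ← Real.rpow_natCast ((d : ℝ) ^ ((6 : ℝ)⁻¹)) 6, ← Real.rpow_mul hdR.le]
      norm_num
    set α : ℂ := (t6 : ℂ) * Complex.I with hα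
    have hI2 : (Complex.I : ℂ) ^ 2 = -1 := Complex.I_sq
    have hα6 : α ^ 6 = -((d : ℚ) : ℂ) := by
      rw [hα]
      have : ((t6 : ℂ)) ^ 6 = ((d : ℝ) : ℂ) := by
        rw [show ((t6 : ℂ)) ^ 6 = ((t6 ^ 6 : ℝ) : ℂ) by push_cast; ring, h6]
      rw [mul_pow, this]
      have hcast : ((d : ℝ) : ℂ) = ((d : ℚ) : ℂ) := by norm_cast
      rw [hcast]
      linear_combination ((d : ℚ) : ℂ) * (Complex.I ^ 4 - Complex.I ^ 2 + 1) * Complex.I_sq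
    have hα2 : α ^ 2 = -((t6 ^ 2 : ℝ) : ℂ) := by
      rw [hα]
      push_cast
      linear_combination ((t6 : ℂ)) ^ 2 * Complex.I_sq
    have hαne : α ≠ 0 := by
      rw [hα]
      exact mul_ne_zero (Complex.ofReal_ne_zero.mpr (ne_of_gt ht6pos)) Complex.I_ne_zero
    have hmapd : algebraMap ℚ ℂ d = ((d : ℚ) : ℂ) := by norm_cast
    have hintα : IsIntegral ℚ α := by
      refine ⟨X ^ 6 + C d, monic_X_pow_add_C d (by norm_num), ?_⟩
      rw [← aeval_def]
      simp only [map_add, map_pow, aeval_X, aeval_C]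
      rw [hmapd, hα6]
      ring
    have hroot : aeval α P = 0 := by
      rw [hP]
      simp only [map_add, map_mul, map_pow, aeval_X, aeval_C]
      have hmapA : algebraMap ℚ ℂ (A : ℚ) = ((A : ℚ) : ℂ) := by norm_cast
      have hmapB : algebraMap ℚ ℂ (B : ℚ) = ((B : ℚ) : ℂ) := by norm_cast
      rw [hmapA, hmapB, hα6]
      have hAd : (A : ℚ) * d = (B : ℚ) := by rw [hd]; field_simp
      have hAdC : ((A : ℚ) : ℂ) * ((d : ℚ) : ℂ) = ((B : ℚ) : ℂ) := by exact_mod_cast hAd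
      linear_combination -hAdC
    obtain ⟨x, hx⟩ := hfac (minpoly ℚ α) (minpoly.monic hintα) (minpoly.irreducible hintα)
      (minpoly.dvd ℚ α hroot)
    have h0 : (minpoly ℚ α).eval₂ (algebraMap ℚ ℂ) α = 0 := by
      rw [← aeval_def]; exact minpoly.aeval ℚ α
    set φ := AdjoinRoot.lift (algebraMap ℚ ℂ) α h0 with hφ
    set z : ℂ := φ x with hzdef
    have hz : z ^ 2 + z + 1 = 0 := by
      have hy := congrArg φ hx
      simp only [map_add, map_pow, map_one, map_zero] at hy
      exact hy
    have hzK : z ∈ IntermediateField.adjoin ℚ {α} := by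
      obtain ⟨p, hp⟩ := AdjoinRoot.mk_surjective x
      have : z = aeval α p := by
        rw [hzdef, ← hp, hφ, AdjoinRoot.lift_mk, aeval_def]
      rw [this]
      have hmem : aeval α p ∈ Algebra.adjoin ℚ ({α} : Set ℂ) := by
        rw [Algebra.adjoin_singleton_eq_range_aeval]
        exact ⟨p, rfl⟩
      exact IntermediateField.algebra_adjoin_le_adjoin ℚ {α} hmem
    set w : ℂ := 2 * z + 1 with hwdef
    have hw2 : w ^ 2 = -3 := by rw [hwdef]; linear_combination 4 * hz
    have hwK : w ∈ IntermediateField.adjoin ℚ {α} := by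
      refine add_mem (mul_mem ?_ hzK) (one_mem _)
      have := IntermediateField.algebraMap_mem (IntermediateField.adjoin ℚ {α}) (2 : ℚ)
      simpa using this
    have hconjw : (starRingEnd ℂ) w = -w := by
      have h1 : ((starRingEnd ℂ) w) ^ 2 = -3 := by
        rw [← map_pow, hw2]
        simp only [map_neg, map_ofNat]
      have h2 : ((starRingEnd ℂ) w - w) * ((starRingEnd ℂ) w + w) = 0 := by
        linear_combination h1 - hw2
      rcases mul_eq_zero.mp h2 with h | h
      · exfalso
        have hcw : (starRingEnd ℂ) w = w := sub_eq_zero.mp h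
        obtain ⟨rr, hrr⟩ := Complex.conj_eq_iff_real.mp hcw
        rw [hrr] at hw2
        have : (rr : ℝ) ^ 2 = -3 := by exact_mod_cast hw2
        nlinarith [sq_nonneg rr]
      · exact eq_neg_of_add_eq_zero_left h
    have hconjα : (starRingEnd ℂ) α = -α := by
      rw [hα]
      simp [map_mul, Complex.conj_ofReal, Complex.conj_I]
    set r : ℂ := w / α ^ 3 with hrdef
    have hrK : r ∈ IntermediateField.adjoin ℚ {α} := by
      exact div_mem hwK (pow_mem (IntermediateField.mem_adjoin_simple_self ℚ α) 3)
    have hconjr : (starRingEnd ℂ) r = r := by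
      rw [hrdef, map_div₀, hconjw, map_pow, hconjα]
      rw [show (-α) ^ 3 = -(α ^ 3) by ring]
      exact neg_div_neg_eq _ _
    have hα3ne : α ^ 3 ≠ 0 := pow_ne_zero _ hαne
    have hr2 : r ^ 2 = 3 / ((d : ℚ) : ℂ) := by
      have hdC : ((d : ℚ) : ℂ) ≠ 0 := by exact_mod_cast hd0
      rw [hrdef, div_pow, ← pow_mul]
      norm_num
      rw [hw2, hα6]
      rw [neg_div_neg_eq]
    -- The real subfield and E = ℚ(α²)
    set E : IntermediateField ℚ ℂ := IntermediateField.adjoin ℚ {α ^ 2} with hE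
    have hθE : α ^ 2 ∈ E := IntermediateField.mem_adjoin_simple_self ℚ (α ^ 2)
    set F : IntermediateField ℚ ℂ :=
      Subfield.toIntermediateField Complex.ofRealHom.fieldRange
        (fun q => ⟨(q : ℝ), by push_cast; simp⟩) with hF
    have hEF : E ≤ F := by
      rw [hE, IntermediateField.adjoin_le_iff]
      intro y hy
      rcases hy with rfl
      refine ⟨-(t6 ^ 2), ?_⟩
      rw [hα2]
      push_cast [Complex.ofRealHom_eq_coe]
      ring
    have hEreal : ∀ y ∈ E, (starRingEnd ℂ) y = y := by
      intro y hy
      obtain ⟨s, hs⟩ := hEF hy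
      rw [← hs]
      exact Complex.conj_ofReal s
    -- decompose r
    obtain ⟨u, hu, v, hv, huv⟩ :=
      quadratic_decomp_aux E t6 ht6pos α hα hθE hEreal hrK
    have hv0 : v = 0 := by
      have h2 : (starRingEnd ℂ) (u + v * α) = u + v * α := by rw [← huv]; exact hconjr
      rw [map_add, map_mul, hEreal u hu, hEreal v hv, hconjα] at h2
      have h3 : 2 * v * α = 0 := by linear_combination -h2
      rcases mul_eq_zero.mp h3 with h | h
      · rcases mul_eq_zero.mp h with h' | h'
        · norm_num at h'
        · exact h'
      · exact absurd h hαne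
    have hrE : r ∈ E := by
      rw [huv, hv0]
      simpa using hu
    -- degree bookkeeping
    have hθreal : α ^ 2 = ((-(t6 ^ 2) : ℝ) : ℂ) := by rw [hα2]; push_cast; ring
    have hθ3 : (α ^ 2) ^ 3 = -((d : ℚ) : ℂ) := by
      rw [← pow_mul]
      norm_num [hα6]
    have hintθ : IsIntegral ℚ (α ^ 2) := by
      refine ⟨X ^ 3 + C d, monic_X_pow_add_C d (by norm_num), ?_⟩
      rw [← aeval_def]
      simp only [map_add, map_pow, aeval_X, aeval_C]
      rw [hmapd, hθ3]
      ring
    haveI hEfd : FiniteDimensional ℚ E := IntermediateField.adjoin.finiteDimensional hintθ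
    have hmap3d : algebraMap ℚ ℂ (3 / d) = ((3 / d : ℚ) : ℂ) := by norm_cast
    have haev : aeval r (X ^ 2 - C (3 / d) : ℚ[X]) = 0 := by
      simp only [map_sub, map_pow, aeval_X, aeval_C]
      rw [hmap3d, hr2]
      push_cast
      ring
    have hrintC : IsIntegral ℚ r := by
      refine ⟨X ^ 2 - C (3 / d), monic_X_pow_sub_C _ (by norm_num), ?_⟩
      rw [← aeval_def]
      exact haev
    have hminr_dvd : minpoly ℚ r ∣ X ^ 2 - C (3 / d) := minpoly.dvd ℚ r haev
    have hkle2 : (minpoly ℚ r).natDegree ≤ 2 := by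
      have h2 := Polynomial.natDegree_le_of_dvd hminr_dvd
        (Polynomial.X_pow_sub_C_ne_zero (by norm_num) _)
      rwa [Polynomial.natDegree_X_pow_sub_C] at h2
    -- minpoly of r over E element
    set rE : E := ⟨r, hrE⟩ with hrEdef
    have hminr_eq : minpoly ℚ (rE : ℂ) = minpoly ℚ rE :=
      minpoly.algebraMap_eq (algebraMap E ℂ).injective rE
    have hkdvd : (minpoly ℚ r).natDegree ∣ Module.finrank ℚ E := by
      have heq : minpoly ℚ r = minpoly ℚ rE := by rw [← hminr_eq]
      rw [heq]
      exact minpoly.degree_dvd (IsIntegral.of_finite ℚ rE)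
    have hfinrankE : Module.finrank ℚ E = (minpoly ℚ (α ^ 2)).natDegree :=
      IntermediateField.adjoin.finrank hintθ
    -- minpoly of α² has odd degree
    have hmθ_dvd : minpoly ℚ (α ^ 2) ∣ X ^ 3 + C d := by
      apply minpoly.dvd
      simp only [map_add, map_pow, aeval_X, aeval_C]
      rw [hmapd, hθ3]
      ring
    have hf_ne : (X ^ 3 + C d : ℚ[X]) ≠ 0 := (monic_X_pow_add_C d (by norm_num)).ne_zero
    have hn_le : (minpoly ℚ (α ^ 2)).natDegree ≤ 3 := by
      have h3 := Polynomial.natDegree_le_of_dvd hmθ_dvd hf_ne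
      rwa [Polynomial.natDegree_X_pow_add_C] at h3
    have hn_pos : 0 < (minpoly ℚ (α ^ 2)).natDegree := minpoly.natDegree_pos hintθ
    have hn_ne2 : (minpoly ℚ (α ^ 2)).natDegree ≠ 2 := by
      intro hn2
      obtain ⟨q, hq⟩ := hmθ_dvd
      have hq_monic : q.Monic := by
        have hm := minpoly.monic hintθ
        have hmo := monic_X_pow_add_C (R := ℚ) d (show (3 : ℕ) ≠ 0 by norm_num)
        rw [hq] at hmo
        exact hm.of_mul_monic_left hmo
      have hq_deg : q.natDegree = 1 := by
        have hdeg := congrArg Polynomial.natDegree hq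
        rw [Polynomial.natDegree_X_pow_add_C,
          Polynomial.natDegree_mul (minpoly.ne_zero hintθ) hq_monic.ne_zero, hn2] at hdeg
        omega
      have hq_eq : q = X + C (q.coeff 0) := hq_monic.eq_X_add_C hq_deg
      set ρQ : ℚ := -(q.coeff 0) with hρQ
      have hρ_root : ρQ ^ 3 + d = 0 := by
        have heval := congrArg (Polynomial.eval ρQ) hq
        rw [hq_eq] at heval
        simp only [Polynomial.eval_add, Polynomial.eval_mul, Polynomial.eval_pow,
          Polynomial.eval_X, Polynomial.eval_C] at heval
        have hz0 : ρQ + q.coeff 0 = 0 := by rw [hρQ]; ring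
        rw [hz0, mul_zero] at heval
        exact heval
      -- α² is the real cube root, so α² = ρQ, hence α² rational, degree 1 ≠ 2
      have hθR3 : (-(t6 ^ 2) : ℝ) ^ 3 = -(d : ℝ) := by
        rw [show (-(t6 ^ 2) : ℝ) ^ 3 = -(t6 ^ 6) by ring, h6]
      have hρR3 : ((ρQ : ℝ)) ^ 3 = -(d : ℝ) := by
        have hc : (ρQ : ℝ) ^ 3 + (d : ℝ) = 0 := by exact_mod_cast hρ_root
        linarith
      have hcube : (-(t6 ^ 2) : ℝ) = (ρQ : ℝ) := by
        have hodd : Odd (3 : ℕ) := ⟨1, rfl⟩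
        exact (hodd.strictMono_pow (R := ℝ)).injective (by rw [hθR3, hρR3])
      have hθ_rat : α ^ 2 ∈ (algebraMap ℚ ℂ).range := by
        refine ⟨ρQ, ?_⟩
        have hmapρ : algebraMap ℚ ℂ ρQ = ((ρQ : ℚ) : ℂ) := by norm_cast
        rw [hmapρ, hθreal, hcube]
        norm_cast
      have h1' : (minpoly ℚ (α ^ 2)).natDegree = 1 := minpoly.natDegree_eq_one_iff.mpr hθ_rat
      omega
    have hn_odd : Odd (minpoly ℚ (α ^ 2)).natDegree := by
      rcases Nat.even_or_odd (minpoly ℚ (α ^ 2)).natDegree with he | ho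
      · exfalso
        obtain ⟨m, hm⟩ := he
        omega
      · exact ho
    -- conclude: natDegree of minpoly r is 1
    have hk1 : (minpoly ℚ r).natDegree = 1 := by
      rw [hfinrankE] at hkdvd
      have hkpos : 0 < (minpoly ℚ r).natDegree := minpoly.natDegree_pos hrintC
      have hkne2 : (minpoly ℚ r).natDegree ≠ 2 := by
        intro h2
        rw [h2] at hkdvd
        exact (Nat.not_even_iff_odd.mpr hn_odd) (even_iff_two_dvd.mpr hkdvd)
      omega
    have hr_rat : r ∈ (algebraMap ℚ ℂ).range := minpoly.natDegree_eq_one_iff.mp hk1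
    obtain ⟨q0, hq0⟩ := hr_rat
    refine ⟨q0, ?_⟩
    have hq0' : ((q0 : ℚ) : ℂ) = r := by rw [← hq0]; norm_cast
    have hfin : ((3 / d : ℚ) : ℂ) = ((q0 : ℚ) : ℂ) ^ 2 := by
      rw [hq0', hr2]
      push_cast
      ring
    exact_mod_cast hfin
end

section
/- Let α, β be nonzero integers such that: (1) α ≡ β (mod 2^{v₂(α)+2}·3^{v₃(α)+2}); (2) α = c·ℓ, where ℓ is a squarefree integer and gcd(c,ℓ) = 1; (3) β = c·q^{2+6k}·η, where η is a squarefree integer, gcd(c,η) = gcd(q, c·η) = 1, k ≥ 0 is an integer, and q ≥ 5 is a prime with q ≡ 2 (mod 3). Then W(α) = −W(β). -/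
/-- `v₂(α)`, the 2-adic valuation. -/
def v2 (α : ℤ) : ℕ := padicValInt 2 α
/-- `v₃(α)`, the 3-adic valuation. -/
def v3 (α : ℤ) : ℕ := padicValInt 3 α
/-- `α₂ = α / 2^{v₂(α)}`. -/
def part2 (α : ℤ) : ℤ := α / 2 ^ v2 α
/-- `α₃ = α / 3^{v₃(α)}`. -/
def part3 (α : ℤ) : ℤ := α / 3 ^ v3 α
/-- `χ₄(u) = 1` if `u ≡ 1 (mod 4)`, `-1` otherwise (for odd `u`, i.e. `u ≡ 3 (mod 4)`). -/
def chi4 (u : ℤ) : ℤ := if u % 4 = 1 then 1 else -1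

/-- The local factor `W₂(α)` for the curve `y² = x³ + α`. -/
def W2six (α : ℤ) : ℤ :=
  if (v2 α % 6 = 0 ∨ v2 α % 6 = 2) ∨
     ((v2 α % 6 = 1 ∨ v2 α % 6 = 3 ∨ v2 α % 6 = 4 ∨ v2 α % 6 = 5) ∧ part2 α % 4 = 3)
  then -1 else 1

/-- The local factor `W₃(α)` for the curve `y² = x³ + α`. -/
def W3six (α : ℤ) : ℤ :=
  if ((v3 α % 6 = 1 ∨ v3 α % 6 = 2) ∧ part3 α % 3 = 1) ∨
     ((v3 α % 6 = 4 ∨ v3 α % 6 = 5) ∧ part3 α % 3 = 2) ∨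
     (v3 α % 6 = 0 ∧ (part3 α % 9 = 5 ∨ part3 α % 9 = 7)) ∨
     (v3 α % 6 = 3 ∧ (part3 α % 9 = 2 ∨ part3 α % 9 = 4))
  then -1 else 1

/-- `R(α) = W₂(α)·χ₄(α₂)·W₃(α)·(−1)^{v₃(α)}`. -/
def Rsix (α : ℤ) : ℤ := W2six α * chi4 (part2 α) * W3six α * (-1) ^ (v3 α)

/-- `W(α)`, the root number of `y² = x³ + α`:
`W(α) = −R(α)·∏_{p ≥ 5 prime, p² | α} c_p(α)` where `c_p(α) = (−3/p)` if
`v_p(α) ≡ 2, 4 (mod 6)` and `c_p(α) = 1` otherwise. -/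
def Wsix (α : ℤ) : ℤ :=
  -Rsix α * ∏ p ∈ α.natAbs.primeFactors.filter (fun p => 5 ≤ p ∧ p ^ 2 ∣ α.natAbs),
    (if padicValInt p α % 6 = 2 ∨ padicValInt p α % 6 = 4 then jacobiSym (-3) p else 1)

lemma val_eq_of_dvd {p : ℕ} [hp : Fact p.Prime] {a b : ℤ} (ha : a ≠ 0) (hb : b ≠ 0)
    (h : (p:ℤ) ^ (padicValInt p a + 1) ∣ b - a) : padicValInt p b = padicValInt p a := by
  have h1 : (p:ℤ) ^ padicValInt p a ∣ b - a := dvd_trans (pow_dvd_pow _ (Nat.le_succ _)) h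
  have h2 : (p:ℤ) ^ padicValInt p a ∣ b := by
    have := dvd_add h1 (padicValInt_dvd (p := p) a); simpa using this
  have h3 : padicValInt p a ≤ padicValInt p b :=
    ((padicValInt_dvd_iff _ _).mp h2).resolve_left hb
  by_contra hne
  have h4 : padicValInt p a + 1 ≤ padicValInt p b := by omega
  have h5 : (p:ℤ) ^ (padicValInt p a + 1) ∣ b := (padicValInt_dvd_iff _ _).mpr (Or.inr h4)
  have h6 : (p:ℤ) ^ (padicValInt p a + 1) ∣ a := by
    have := dvd_sub h5 h; simpa using this
  rcases (padicValInt_dvd_iff _ _).mp h6 with h | h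
  · exact ha h
  · omega

lemma part_mod_eq {p : ℕ} [hp : Fact p.Prime] {a b : ℤ} (ha : a ≠ 0) (hb : b ≠ 0)
    (h : (p:ℤ) ^ (padicValInt p a + 2) ∣ b - a) :
    padicValInt p b = padicValInt p a ∧
    (b / (p:ℤ) ^ padicValInt p b) % (p:ℤ)^2 = (a / (p:ℤ) ^ padicValInt p a) % (p:ℤ)^2 := by
  have hv := val_eq_of_dvd ha hb (dvd_trans (pow_dvd_pow _ (by omega)) h)
  refine ⟨hv, ?_⟩
  obtain ⟨a', ha'⟩ := padicValInt_dvd (p := p) a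
  obtain ⟨b', hb'⟩ := padicValInt_dvd (p := p) b
  rw [hv] at hb'
  obtain ⟨t, ht⟩ := h
  have hp0 : ((p:ℤ)) ^ padicValInt p a ≠ 0 :=
    pow_ne_zero _ (Int.natCast_ne_zero.mpr hp.out.ne_zero)
  have hda := Int.mul_ediv_cancel_left a' hp0
  have hdb := Int.mul_ediv_cancel_left b' hp0
  rw [← ha'] at hda
  rw [← hb'] at hdb
  rw [hv, hda, hdb]
  have key : (p:ℤ) ^ padicValInt p a * (b' - a') = (p:ℤ) ^ padicValInt p a * ((p:ℤ)^2 * t) := by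
    rw [mul_sub, ← hb', ← ha']
    rw [pow_add] at ht
    linarith [ht]
  have key2 : b' - a' = (p:ℤ)^2 * t := mul_left_cancel₀ hp0 key
  have : b' ≡ a' [ZMOD (p:ℤ)^2] := by
    rw [Int.modEq_iff_dvd]
    exact ⟨-t, by linarith⟩
  exact this

lemma jac_neg_three {q : ℕ} (hq : q.Prime) (hq5 : 5 ≤ q) (hq3 : q % 3 = 2) :
    jacobiSym (-3) q = -1 := by
  have hodd : Odd q := hq.odd_of_ne_two (by omega)
  have h2 : q % 2 = 1 := Nat.odd_iff.mp hodd
  have h12 : q % 12 = 5 ∨ q % 12 = 11 := by omega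
  have := jacobiSym.mod_right (-3) hodd
  norm_num at this
  rw [this]
  rcases h12 with h | h <;> rw [h] <;> norm_num

lemma sq_dvd_iff {c l : ℤ} {p : ℕ} (hp : p.Prime) (hl : Squarefree l) (h : IsCoprime c l) :
    (p:ℤ)^2 ∣ c * l ↔ (p:ℤ)^2 ∣ c := by
  have hpi : Prime (p:ℤ) := Nat.prime_iff_prime_int.mp hp
  constructor
  · intro h2
    by_cases hpl : (p:ℤ) ∣ l
    · obtain ⟨l', rfl⟩ := hpl
      have hpl' : ¬ (p:ℤ) ∣ l' := fun hd =>
        hpi.not_unit (hl (p:ℤ) (mul_dvd_mul_left ((p:ℤ)) hd))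
      have hpc : ¬ (p:ℤ) ∣ c := fun hd =>
        hpi.not_unit (h.isUnit_of_dvd' hd (dvd_mul_right _ _))
      exfalso
      have h5 : (p:ℤ) ∣ c * l' := by
        have h6 : (p:ℤ)*(p:ℤ) ∣ (p:ℤ) * (c * l') := by
          have : c * ((p:ℤ) * l') = (p:ℤ) * (c * l') := by ring
          rw [← this, ← sq]; exact h2
        exact (mul_dvd_mul_iff_left hpi.ne_zero).mp h6
      rcases hpi.dvd_mul.mp h5 with h | h
      · exact hpc h
      · exact hpl' h
    · have hco : IsCoprime ((p:ℤ)^2) l := (hpi.coprime_iff_not_dvd.mpr hpl).pow_left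
      exact hco.dvd_of_dvd_mul_right h2
  · intro h2
    exact h2.mul_right _

lemma Rsix_eq {a b : ℤ} (ha : a ≠ 0) (hb : b ≠ 0)
    (h : ((2:ℤ) ^ (v2 a + 2) * 3 ^ (v3 a + 2)) ∣ b - a) : Rsix a = Rsix b := by
  have h2 : ((2:ℕ):ℤ) ^ (padicValInt 2 a + 2) ∣ b - a := by
    refine dvd_trans ?_ h
    push_cast
    exact Dvd.intro _ rfl
  have h3 : ((3:ℕ):ℤ) ^ (padicValInt 3 a + 2) ∣ b - a := by
    refine dvd_trans ?_ h
    push_cast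
    exact Dvd.intro_left _ rfl
  obtain ⟨hv2, hm2⟩ := part_mod_eq ha hb h2
  obtain ⟨hv3, hm3⟩ := part_mod_eq ha hb h3
  push_cast at hm2 hm3
  have hm2' : part2 b % 4 = part2 a % 4 := hm2
  have hm3' : part3 b % 9 = part3 a % 9 := hm3
  have hv2' : v2 b = v2 a := hv2
  have hv3' : v3 b = v3 a := hv3
  have hm3'' : part3 b % 3 = part3 a % 3 := by
    have e1 : part3 b % 3 = part3 b % 9 % 3 := (Int.emod_emod_of_dvd _ (by norm_num)).symm
    have e2 : part3 a % 3 = part3 a % 9 % 3 := (Int.emod_emod_of_dvd _ (by norm_num)).symm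
    rw [e1, e2, hm3']
  simp only [Rsix, W2six, W3six, chi4, part2, part3] at *
  rw [hv2'] at hm2'
  rw [hv3'] at hm3' hm3''
  simp only [hm2', hm3', hm3'', hv2', hv3']
  congr

theorem flipping_I (α β c ℓ η : ℤ) (q : ℕ) (k : ℕ)
    (hα : α ≠ 0) (hβ : β ≠ 0)
    (hcong : α ≡ β [ZMOD ((2 : ℤ) ^ (v2 α + 2) * 3 ^ (v3 α + 2))])
    (hαfac : α = c * ℓ) (hℓ : Squarefree ℓ) (hcℓ : Int.gcd c ℓ = 1)
    (hq : q.Prime) (hq5 : 5 ≤ q) (hq3 : q % 3 = 2)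
    (hβfac : β = c * (q : ℤ) ^ (2 + 6 * k) * η) (hη : Squarefree η)
    (hcη : Int.gcd c η = 1) (hqcη : Int.gcd (q : ℤ) (c * η) = 1) :
    Wsix α = -Wsix β := by
  have hc : c ≠ 0 := fun h => hα (by rw [hαfac, h, zero_mul])
  have hℓ0 : ℓ ≠ 0 := fun h => hα (by rw [hαfac, h, mul_zero])
  have hη0 : η ≠ 0 := fun h => hβ (by rw [hβfac, h, mul_zero])
  have hq0 : ((q:ℤ)) ≠ 0 := Int.natCast_ne_zero.mpr hq.ne_zero
  have hqe : ((q:ℤ))^(2+6*k) ≠ 0 := pow_ne_zero _ hq0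
  have hcl : IsCoprime c ℓ := Int.isCoprime_iff_gcd_eq_one.mpr hcℓ
  have hce : IsCoprime c η := Int.isCoprime_iff_gcd_eq_one.mpr hcη
  have hqce : IsCoprime ((q:ℤ)) (c * η) := Int.isCoprime_iff_gcd_eq_one.mpr hqcη
  have hqc : IsCoprime ((q:ℤ)) c := hqce.of_mul_right_left
  have hqη : IsCoprime ((q:ℤ)) η := hqce.of_mul_right_right
  have hnd : ∀ {x y : ℤ} (p : ℕ), p.Prime → IsCoprime x y → (p:ℤ) ∣ x → ¬ (p:ℤ) ∣ y :=
    fun p hp hxy hx hy => (Nat.prime_iff_prime_int.mp hp).not_unit (hxy.isUnit_of_dvd' hx hy)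
  have hqn : ¬ (q:ℤ) ∣ c := hnd q hq hqc dvd_rfl
  have hqη' : ¬ (q:ℤ) ∣ η := hnd q hq hqη dvd_rfl
  have hcqη : IsCoprime (c * (q:ℤ)^(2+6*k)) η := hce.mul_left (hqη.pow_left)
  have claimA : ∀ p:ℕ, p.Prime → ((p:ℤ)^2 ∣ α ↔ (p:ℤ)^2 ∣ c) := fun p hp => by
    rw [hαfac]; exact sq_dvd_iff hp hℓ hcl
  have claimB : ∀ p:ℕ, p.Prime → ((p:ℤ)^2 ∣ β ↔ (p:ℤ)^2 ∣ c * (q:ℤ)^(2+6*k)) := fun p hp => by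
    rw [hβfac]; exact sq_dvd_iff hp hη hcqη
  have hpq' : ∀ p:ℕ, p.Prime → p ≠ q → ¬ (p:ℤ) ∣ (q:ℤ)^(2+6*k) := by
    intro p hp hne hd
    have hdq := (Nat.prime_iff_prime_int.mp hp).dvd_of_dvd_pow hd
    rw [Int.natCast_dvd_natCast] at hdq
    exact hne ((Nat.prime_dvd_prime_iff_eq hp hq).mp hdq)
  have claimC : ∀ p:ℕ, p.Prime → p ≠ q → ((p:ℤ)^2 ∣ c * (q:ℤ)^(2+6*k) ↔ (p:ℤ)^2 ∣ c) := by
    intro p hp hne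
    constructor
    · intro hd
      exact (((Nat.prime_iff_prime_int.mp hp).coprime_iff_not_dvd.mpr
        (hpq' p hp hne)).pow_left).dvd_of_dvd_mul_right hd
    · exact fun hd => hd.mul_right _
  have hmem : ∀ (γ : ℤ), γ ≠ 0 → ∀ p : ℕ,
      (p ∈ γ.natAbs.primeFactors.filter (fun p => 5 ≤ p ∧ p ^ 2 ∣ γ.natAbs) ↔
        (p.Prime ∧ 5 ≤ p ∧ (p:ℤ)^2 ∣ γ)) := by
    intro γ hγ p
    have hcast : ((p:ℤ)^2 ∣ γ) ↔ p^2 ∣ γ.natAbs := by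
      rw [show ((p:ℤ)^2) = ((p^2 : ℕ) : ℤ) by push_cast; ring]
      exact Int.natCast_dvd
    simp only [Finset.mem_filter, Nat.mem_primeFactors, hcast]
    constructor
    · rintro ⟨⟨h1, _, _⟩, h4, h5⟩
      exact ⟨h1, h4, h5⟩
    · rintro ⟨h1, h2, h3⟩
      exact ⟨⟨h1, dvd_trans (dvd_pow_self p two_ne_zero) h3, Int.natAbs_ne_zero.mpr hγ⟩, h2, h3⟩
  have hqnotin : q ∉ α.natAbs.primeFactors.filter (fun p => 5 ≤ p ∧ p ^ 2 ∣ α.natAbs) := by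
    rw [hmem α hα q]
    rintro ⟨-, -, h3⟩
    exact hqn (dvd_trans (dvd_pow_self _ two_ne_zero) ((claimA q hq).mp h3))
  have hset : β.natAbs.primeFactors.filter (fun p => 5 ≤ p ∧ p ^ 2 ∣ β.natAbs)
      = insert q (α.natAbs.primeFactors.filter (fun p => 5 ≤ p ∧ p ^ 2 ∣ α.natAbs)) := by
    apply Finset.ext
    intro p
    rw [Finset.mem_insert, hmem α hα p, hmem β hβ p]
    constructor
    · rintro ⟨h1, h2, h3⟩
      by_cases hpq : p = q
      · exact Or.inl hpq
      · exact Or.inr ⟨h1, h2, (claimA p h1).mpr ((claimC p h1 hpq).mp ((claimB p h1).mp h3))⟩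
    · rintro (rfl | ⟨h1, h2, h3⟩)
      · refine ⟨hq, hq5, ?_⟩
        rw [hβfac]
        exact ((pow_dvd_pow _ (by omega : 2 ≤ 2 + 6*k)).mul_left c).mul_right η
      · exact ⟨h1, h2, (claimB p h1).mpr (((claimA p h1).mp h3).mul_right _)⟩
  have hval : ∀ p:ℕ, p.Prime → (p:ℤ) ∣ c → padicValInt p α = padicValInt p β := by
    intro p hp hpc
    haveI : Fact p.Prime := ⟨hp⟩
    have hpl : ¬ (p:ℤ) ∣ ℓ := hnd p hp hcl hpc
    have hpη : ¬ (p:ℤ) ∣ η := hnd p hp hce hpc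
    have hpne : p ≠ q := fun h => hqn (h ▸ hpc)
    rw [hαfac, hβfac, padicValInt.mul hc hℓ0, padicValInt.mul (mul_ne_zero hc hqe) hη0,
      padicValInt.mul hc hqe, padicValInt.eq_zero_of_not_dvd hpl,
      padicValInt.eq_zero_of_not_dvd hpη, padicValInt.eq_zero_of_not_dvd (hpq' p hp hpne)]
  have hvq : padicValInt q β = 2 + 6 * k := by
    haveI : Fact q.Prime := ⟨hq⟩
    rw [hβfac, padicValInt.mul (mul_ne_zero hc hqe) hη0, padicValInt.mul hc hqe,
      padicValInt.eq_zero_of_not_dvd hqn, padicValInt.eq_zero_of_not_dvd hqη']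
    have : padicValInt q ((q:ℤ)^(2+6*k)) = 2 + 6*k := by
      rw [show ((q:ℤ)^(2+6*k)) = ((q^(2+6*k) : ℕ) : ℤ) by push_cast; ring,
        padicValInt.of_nat, padicValNat.prime_pow]
    omega
  have hR : Rsix α = Rsix β := Rsix_eq hα hβ (Int.ModEq.dvd hcong)
  have hprod : (∏ p ∈ β.natAbs.primeFactors.filter (fun p => 5 ≤ p ∧ p ^ 2 ∣ β.natAbs),
        (if padicValInt p β % 6 = 2 ∨ padicValInt p β % 6 = 4 then jacobiSym (-3) p else 1))
      = -(∏ p ∈ α.natAbs.primeFactors.filter (fun p => 5 ≤ p ∧ p ^ 2 ∣ α.natAbs),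
        (if padicValInt p α % 6 = 2 ∨ padicValInt p α % 6 = 4 then jacobiSym (-3) p else 1)) := by
    rw [hset, Finset.prod_insert hqnotin]
    have hterm : (if padicValInt q β % 6 = 2 ∨ padicValInt q β % 6 = 4
        then jacobiSym (-3) q else 1) = -1 := by
      rw [hvq, if_pos (Or.inl (by omega))]
      exact jac_neg_three hq hq5 hq3
    have hcong2 : ∏ p ∈ α.natAbs.primeFactors.filter (fun p => 5 ≤ p ∧ p ^ 2 ∣ α.natAbs),
          (if padicValInt p β % 6 = 2 ∨ padicValInt p β % 6 = 4 then jacobiSym (-3) p else 1)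
        = ∏ p ∈ α.natAbs.primeFactors.filter (fun p => 5 ≤ p ∧ p ^ 2 ∣ α.natAbs),
          (if padicValInt p α % 6 = 2 ∨ padicValInt p α % 6 = 4 then jacobiSym (-3) p else 1) := by
      refine Finset.prod_congr rfl (fun p hp => ?_)
      obtain ⟨h1, h2, h3⟩ := (hmem α hα p).mp hp
      have hpc : (p:ℤ) ∣ c := dvd_trans (dvd_pow_self _ two_ne_zero) ((claimA p h1).mp h3)
      rw [hval p h1 hpc]
    rw [hterm, hcong2]
    ring
  simp only [Wsix]
  rw [hprod, hR]
  ring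
end

section
/- Let α, β be nonzero integers with α ≡ β (mod 2^{v₂(α)+2}·3^{v₃(α)+2}). Then R(α) = R(β). -/
lemma key (p : ℕ) [hp : Fact p.Prime] (α β : ℤ) (hα : α ≠ 0) (hβ : β ≠ 0)
    (h : (p : ℤ) ^ (padicValInt p α + 2) ∣ (β - α)) :
    padicValInt p β = padicValInt p α ∧
      (β / (p : ℤ) ^ padicValInt p β) % (p : ℤ) ^ 2
        = (α / (p : ℤ) ^ padicValInt p α) % (p : ℤ) ^ 2 := by
  set k := padicValInt p α with hk
  obtain ⟨t, ht⟩ := h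
  obtain ⟨a, ha⟩ : (p : ℤ) ^ k ∣ α := padicValInt_dvd α
  have hnd : ¬ (p : ℤ) ^ (k + 1) ∣ α := by
    intro hd
    rcases (padicValInt_dvd_iff (k+1) α).mp hd with h0 | h1
    · exact hα h0
    · omega
  have hβeq : β = (p : ℤ) ^ k * (a + (p:ℤ)^2 * t) := by
    have : β = α + (p : ℤ) ^ (k + 2) * t := by linarith [ht]
    rw [this, ha]; ring
  have hvβ : padicValInt p β = k := by
    have h1 : k ≤ padicValInt p β := by
      rcases (padicValInt_dvd_iff k β).mp ⟨_, hβeq⟩ with h0 | h1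
      · exact absurd h0 hβ
      · exact h1
    have h2 : ¬ (p : ℤ) ^ (k + 1) ∣ β := by
      intro hd
      apply hnd
      have : α = β - (p : ℤ) ^ (k + 2) * t := by linarith [ht]
      rw [this]
      exact dvd_sub hd (by rw [pow_succ, pow_succ]; exact ⟨(p:ℤ)*t, by ring⟩)
    by_contra hne
    have : k + 1 ≤ padicValInt p β := by omega
    exact h2 ((padicValInt_dvd_iff (k+1) β).mpr (Or.inr this))
  refine ⟨hvβ, ?_⟩
  rw [hvβ, hβeq, ha]
  have hp0 : (p : ℤ) ^ k ≠ 0 := pow_ne_zero _ (by exact_mod_cast hp.out.ne_zero)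
  rw [Int.mul_ediv_cancel_left _ hp0, Int.mul_ediv_cancel_left _ hp0]
  simp [Int.add_mul_emod_self_left]



theorem R_congruence_invariant (α β : ℤ) (hα : α ≠ 0) (hβ : β ≠ 0)
    (hcong : α ≡ β [ZMOD ((2 : ℤ) ^ (v2 α + 2) * 3 ^ (v3 α + 2))]) :
    Rsix α = Rsix β := by
  have hd : ((2 : ℤ) ^ (v2 α + 2) * 3 ^ (v3 α + 2)) ∣ (β - α) := Int.ModEq.dvd hcong
  haveI : Fact (Nat.Prime 2) := ⟨Nat.prime_two⟩
  haveI : Fact (Nat.Prime 3) := ⟨Nat.prime_three⟩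
  have h2 := key 2 α β hα hβ (by
    have := dvd_trans (dvd_mul_right ((2:ℤ)^(v2 α + 2)) (3 ^ (v3 α + 2))) hd
    exact_mod_cast this)
  have h3 := key 3 α β hα hβ (by
    have := dvd_trans (dvd_mul_left ((3:ℤ)^(v3 α + 2)) (2 ^ (v2 α + 2))) hd
    exact_mod_cast this)
  have hv2 : v2 β = v2 α := h2.1
  have hv3 : v3 β = v3 α := h3.1
  have hm4 : part2 β % 4 = part2 α % 4 := by
    have := h2.2; unfold part2 v2; norm_num at this ⊢; rw [h2.1] at this ⊢; exact this
  have hm9 : part3 β % 9 = part3 α % 9 := by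
    have := h3.2; unfold part3 v3; norm_num at this ⊢; rw [h3.1] at this ⊢; exact this
  have hm3 : part3 β % 3 = part3 α % 3 := by
    rw [← Int.emod_emod_of_dvd _ (by norm_num : (3:ℤ) ∣ 9),
        ← Int.emod_emod_of_dvd (part3 α) (by norm_num : (3:ℤ) ∣ 9), hm9]
  unfold Rsix W2six W3six chi4
  rw [hv2, hv3, hm4, hm9, hm3]
end

section
/- Let α, β be nonzero integers such that: (1) α ≡ β (mod 2^{v₂(α)+4}·3^{v₃(α)+1}); (2) α = c·ℓ, where ℓ is a squarefree integer and gcd(c,ℓ) = 1; (3) either β = c·q^{2+4k}·η, where η is a squarefree integer, gcd(c,η) = gcd(q, c·η) = 1, k ≥ 0 is an integer, and q ≥ 5 is a prime with q ≡ 3 (mod 4), or β = c·q^{3+4k}·η, where η is a squarefree integer, gcd(c,η) = gcd(q, c·η) = 1, k ≥ 0 is an integer, and q ≥ 5 is a prime with q ≡ 3 or 5 (mod 8). Then W(α) = −W(β). -/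
/-- The local factor `W₂(α)` for the curve `y² = x³ + αx`. -/
def W2quart (α : ℤ) : ℤ :=
  if ((v2 α % 4 = 1 ∨ v2 α % 4 = 3) ∧ (part2 α % 8 = 1 ∨ part2 α % 8 = 3)) ∨
     (v2 α % 4 = 0 ∧ (part2 α % 16 = 1 ∨ part2 α % 16 = 5 ∨ part2 α % 16 = 9 ∨
        part2 α % 16 = 11 ∨ part2 α % 16 = 13 ∨ part2 α % 16 = 15)) ∨
     (v2 α % 4 = 2 ∧ (part2 α % 16 = 1 ∨ part2 α % 16 = 3 ∨ part2 α % 16 = 5 ∨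
        part2 α % 16 = 7 ∨ part2 α % 16 = 11 ∨ part2 α % 16 = 15))
  then -1 else 1

/-- The local factor `W₃(α)` for the curve `y² = x³ + αx`. -/
def W3quart (α : ℤ) : ℤ := if v3 α % 4 = 2 then -1 else 1

/-- `R(α) = W₂(α)·χ₄(α₂)·W₃(α)·(−1)^{v₃(α)}`. -/
def Rquart (α : ℤ) : ℤ := W2quart α * chi4 (part2 α) * W3quart α * (-1) ^ (v3 α)

/-- `W(α)`, the root number of `y² = x³ + αx`:
`W(α) = −R(α)·∏_{p ≥ 5 prime, p² | α} c_p(α)` where `c_p(α) = (−1/p)` if `v_p(α) ≡ 2 (mod 4)`,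
`c_p(α) = (2/p)` if `v_p(α) ≡ 3 (mod 4)`, and `c_p(α) = 1` otherwise. -/
def Wquart (α : ℤ) : ℤ :=
  -Rquart α * ∏ p ∈ α.natAbs.primeFactors.filter (fun p => 5 ≤ p ∧ p ^ 2 ∣ α.natAbs),
    (if padicValInt p α % 4 = 2 then jacobiSym (-1) p
     else if padicValInt p α % 4 = 3 then jacobiSym 2 p else 1)

/-- Stability of the `p`-adic valuation under congruences. -/
lemma val_stable {p : ℕ} [Fact p.Prime] {a b : ℤ} (ha : a ≠ 0) (hb : b ≠ 0)
    (h : (p : ℤ) ^ (padicValInt p a + 1) ∣ b - a) : padicValInt p b = padicValInt p a := by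
  have h1 : (p : ℤ) ^ padicValInt p a ∣ b := by
    have h' : (p : ℤ) ^ padicValInt p a ∣ b - a + a :=
      dvd_add (dvd_trans (pow_dvd_pow _ (Nat.le_succ _)) h) (padicValInt_dvd a)
    simpa using h'
  have h2 : ¬ (p : ℤ) ^ (padicValInt p a + 1) ∣ b := by
    intro hdvd
    have h'' : (p : ℤ) ^ (padicValInt p a + 1) ∣ a := by
      have := dvd_sub hdvd h
      simpa using this
    rcases (padicValInt_dvd_iff _ _).mp h'' with h0 | hle
    · exact ha h0
    · omega
  rcases (padicValInt_dvd_iff _ _).mp h1 with h0 | hle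
  · exact absurd h0 hb
  · by_contra hne
    have hlt : padicValInt p a + 1 ≤ padicValInt p b := by omega
    exact h2 ((padicValInt_dvd_iff _ _).mpr (Or.inr hlt))

lemma key_dvd {p cn mn : ℕ} (hp : p.Prime) (hc : cn ≠ 0) (hm : mn ≠ 0)
    (hcop : p ∣ cn → ¬ p ∣ mn) (hm1 : padicValNat p mn ≤ 1) :
    (p ^ 2 ∣ cn * mn ↔ p ^ 2 ∣ cn) ∧
      (p ∣ cn → padicValNat p (cn * mn) = padicValNat p cn) := by
  haveI : Fact p.Prime := ⟨hp⟩
  have hcm : cn * mn ≠ 0 := mul_ne_zero hc hm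
  have hmul := padicValNat.mul (p := p) hc hm
  by_cases hpc : p ∣ cn
  · have h0 : padicValNat p mn = 0 := padicValNat.eq_zero_of_not_dvd (hcop hpc)
    refine ⟨?_, fun _ => by omega⟩
    rw [padicValNat_dvd_iff_le hcm, padicValNat_dvd_iff_le hc]
    omega
  · have h0 : padicValNat p cn = 0 := padicValNat.eq_zero_of_not_dvd hpc
    refine ⟨?_, fun h => absurd h hpc⟩
    rw [padicValNat_dvd_iff_le hcm, padicValNat_dvd_iff_le hc]
    omega

lemma part2_cong {a b : ℤ} (hv : padicValInt 2 b = padicValInt 2 a)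
    (hd : (2 : ℤ) ^ (padicValInt 2 a + 4) ∣ b - a) :
    (b / 2 ^ padicValInt 2 b) % 16 = (a / 2 ^ padicValInt 2 a) % 16 := by
  haveI : Fact (Nat.Prime 2) := ⟨Nat.prime_two⟩
  obtain ⟨x, hx⟩ := padicValInt_dvd (p := 2) a
  obtain ⟨y, hy⟩ := padicValInt_dvd (p := 2) b
  push_cast at hx hy
  rw [hv] at hy ⊢
  set v := padicValInt 2 a with hvdef
  clear_value v
  have h2 : (2 : ℤ) ^ v ≠ 0 := by positivity
  rw [hx, hy, Int.mul_ediv_cancel_left _ h2, Int.mul_ediv_cancel_left _ h2]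
  have h16 : (16 : ℤ) ∣ y - x := by
    have hdd : (2 : ℤ) ^ v * 16 ∣ (2 : ℤ) ^ v * (y - x) := by
      calc (2 : ℤ) ^ v * 16 = 2 ^ (v + 4) := by ring
      _ ∣ b - a := hd
      _ = 2 ^ v * (y - x) := by rw [hx, hy]; ring
    exact (mul_dvd_mul_iff_left h2).mp hdd
  exact (Int.modEq_iff_dvd.mpr h16).symm

theorem flipping_II (α β c ℓ η : ℤ) (q : ℕ) (k : ℕ)
    (hα : α ≠ 0) (hβ : β ≠ 0)
    (hcong : α ≡ β [ZMOD ((2 : ℤ) ^ (v2 α + 4) * 3 ^ (v3 α + 1))])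
    (hαfac : α = c * ℓ) (hℓ : Squarefree ℓ) (hcℓ : Int.gcd c ℓ = 1)
    (hq : q.Prime) (hq5 : 5 ≤ q) (hη : Squarefree η)
    (hcη : Int.gcd c η = 1) (hqcη : Int.gcd (q : ℤ) (c * η) = 1)
    (hβfac : (q % 4 = 3 ∧ β = c * (q : ℤ) ^ (2 + 4 * k) * η) ∨
             ((q % 8 = 3 ∨ q % 8 = 5) ∧ β = c * (q : ℤ) ^ (3 + 4 * k) * η)) :
    Wquart α = -Wquart β := by
  obtain ⟨e, he2, hmods, hβe⟩ :
      ∃ e : ℕ, 2 ≤ e ∧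
        ((e % 4 = 2 ∧ q % 4 = 3) ∨ (e % 4 = 3 ∧ (q % 8 = 3 ∨ q % 8 = 5))) ∧
        β = c * (q : ℤ) ^ e * η := by
    rcases hβfac with ⟨h1, h2⟩ | ⟨h1, h2⟩
    · exact ⟨2 + 4 * k, by omega, Or.inl ⟨by omega, h1⟩, h2⟩
    · exact ⟨3 + 4 * k, by omega, Or.inr ⟨by omega, h1⟩, h2⟩
  haveI : Fact (Nat.Prime 2) := ⟨Nat.prime_two⟩
  haveI : Fact (Nat.Prime 3) := ⟨Nat.prime_three⟩
  haveI hqF : Fact q.Prime := ⟨hq⟩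
  have hqodd : Odd q := hq.odd_of_ne_two (by omega)
  -- nonzero facts
  have hc0 : c ≠ 0 := fun h => hα (by simp [hαfac, h])
  have hl0 : ℓ ≠ 0 := fun h => hα (by simp [hαfac, h])
  have hn0 : η ≠ 0 := fun h => hβ (by simp [hβe, h])
  -- the `R` part
  have hdvdall : ((2 : ℤ) ^ (v2 α + 4) * 3 ^ (v3 α + 1)) ∣ β - α := hcong.dvd
  have hd2 : (2 : ℤ) ^ (padicValInt 2 α + 4) ∣ β - α :=
    dvd_trans (dvd_mul_right _ _) hdvdall
  have hd3 : (3 : ℤ) ^ (padicValInt 3 α + 1) ∣ β - α :=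
    dvd_trans (dvd_mul_left _ _) hdvdall
  have hv2 : padicValInt 2 β = padicValInt 2 α :=
    val_stable hα hβ (dvd_trans (pow_dvd_pow _ (by omega)) hd2)
  have hv3 : padicValInt 3 β = padicValInt 3 α := val_stable hα hβ hd3
  have hv2' : v2 β = v2 α := hv2
  have hv3' : v3 β = v3 α := hv3
  have h16 : part2 β % 16 = part2 α % 16 := part2_cong hv2 hd2
  have h8 : part2 β % 8 = part2 α % 8 := by
    rw [← Int.emod_emod_of_dvd _ (by norm_num : (8 : ℤ) ∣ 16), h16,
      Int.emod_emod_of_dvd _ (by norm_num : (8 : ℤ) ∣ 16)]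
  have h4 : part2 β % 4 = part2 α % 4 := by
    rw [← Int.emod_emod_of_dvd _ (by norm_num : (4 : ℤ) ∣ 16), h16,
      Int.emod_emod_of_dvd _ (by norm_num : (4 : ℤ) ∣ 16)]
  have hR : Rquart β = Rquart α := by
    simp only [Rquart, W2quart, W3quart, chi4, hv2', hv3', h16, h8, h4]
  -- natural-number bookkeeping
  have notdvd : ∀ {m n : ℕ}, Nat.Coprime m n → ∀ {p : ℕ}, p.Prime → p ∣ m → p ∣ n → False := by
    intro m n hmn p pp h1 h2
    exact pp.one_lt.ne' (Nat.dvd_one.mp (hmn ▸ Nat.dvd_gcd h1 h2))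
  have hclcop : Nat.Coprime c.natAbs ℓ.natAbs := hcℓ
  have hchcop : Nat.Coprime c.natAbs η.natAbs := hcη
  have hqcop' : Nat.Coprime q (c.natAbs * η.natAbs) := by
    have h : Nat.gcd q ((c * η).natAbs) = 1 := hqcη
    rwa [Int.natAbs_mul] at h
  have hqc : ¬ q ∣ c.natAbs := fun h => notdvd hqcop' hq dvd_rfl (h.mul_right _)
  have hqh : ¬ q ∣ η.natAbs := fun h => notdvd hqcop' hq dvd_rfl (h.mul_left _)
  have hcn0 : c.natAbs ≠ 0 := Int.natAbs_ne_zero.mpr hc0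
  have hln0 : ℓ.natAbs ≠ 0 := Int.natAbs_ne_zero.mpr hl0
  have hhn0 : η.natAbs ≠ 0 := Int.natAbs_ne_zero.mpr hn0
  have han0 : α.natAbs ≠ 0 := Int.natAbs_ne_zero.mpr hα
  have hbn0 : β.natAbs ≠ 0 := Int.natAbs_ne_zero.mpr hβ
  have hqe0 : q ^ e ≠ 0 := pow_ne_zero _ hq.ne_zero
  have hqeh0 : q ^ e * η.natAbs ≠ 0 := mul_ne_zero hqe0 hhn0
  have han : α.natAbs = c.natAbs * ℓ.natAbs := by rw [hαfac, Int.natAbs_mul]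
  have hbn : β.natAbs = c.natAbs * (q ^ e * η.natAbs) := by
    rw [hβe, Int.natAbs_mul, Int.natAbs_mul, Int.natAbs_pow, Int.natAbs_natCast, mul_assoc]
  have hlsf : Squarefree ℓ.natAbs := Int.squarefree_natAbs.mpr hℓ
  have hhsf : Squarefree η.natAbs := Int.squarefree_natAbs.mpr hη
  have hl1 : ∀ {p : ℕ}, p.Prime → padicValNat p ℓ.natAbs ≤ 1 := fun {p} pp => by
    rw [← Nat.factorization_def _ pp]; exact hlsf.natFactorization_le_one p
  have hh1 : ∀ {p : ℕ}, p.Prime → padicValNat p η.natAbs ≤ 1 := fun {p} pp => by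
    rw [← Nat.factorization_def _ pp]; exact hhsf.natFactorization_le_one p
  have keyA : ∀ {p : ℕ}, p.Prime →
      ((p ^ 2 ∣ α.natAbs ↔ p ^ 2 ∣ c.natAbs) ∧
        (p ∣ c.natAbs → padicValNat p α.natAbs = padicValNat p c.natAbs)) := by
    intro p pp
    rw [han]
    exact key_dvd pp hcn0 hln0 (fun h1 h2 => notdvd hclcop pp h1 h2) (hl1 pp)
  have valqeh : ∀ {p : ℕ}, p.Prime → p ≠ q → padicValNat p (q ^ e * η.natAbs) ≤ 1 := by
    intro p pp hpq
    haveI : Fact p.Prime := ⟨pp⟩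
    have h1 : padicValNat p (q ^ e) = 0 := padicValNat.eq_zero_of_not_dvd (by
      intro h
      exact hpq ((Nat.prime_dvd_prime_iff_eq pp hq).mp (pp.dvd_of_dvd_pow h)))
    rw [padicValNat.mul hqe0 hhn0, h1, zero_add]
    exact hh1 pp
  have keyB : ∀ {p : ℕ}, p.Prime → p ≠ q →
      ((p ^ 2 ∣ β.natAbs ↔ p ^ 2 ∣ c.natAbs) ∧
        (p ∣ c.natAbs → padicValNat p β.natAbs = padicValNat p c.natAbs)) := by
    intro p pp hpq
    rw [hbn]
    refine key_dvd pp hcn0 hqeh0 ?_ (valqeh pp hpq)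
    intro h1 h2
    rcases (Nat.Prime.dvd_mul pp).mp h2 with h | h
    · exact hpq ((Nat.prime_dvd_prime_iff_eq pp hq).mp (pp.dvd_of_dvd_pow h))
    · exact notdvd hchcop pp h1 h
  have hqsqc : ¬ q ^ 2 ∣ c.natAbs := fun h =>
    hqc (dvd_trans (dvd_pow_self q two_ne_zero) h)
  have hqnotmem :
      q ∉ Finset.filter (fun p => 5 ≤ p ∧ p ^ 2 ∣ α.natAbs) α.natAbs.primeFactors := by
    simp only [Finset.mem_filter, Nat.mem_primeFactors]
    rintro ⟨-, -, hsq⟩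
    exact hqsqc ((keyA hq).1.mp hsq)
  have hSet : Finset.filter (fun p => 5 ≤ p ∧ p ^ 2 ∣ β.natAbs) β.natAbs.primeFactors
      = insert q (Finset.filter (fun p => 5 ≤ p ∧ p ^ 2 ∣ α.natAbs) α.natAbs.primeFactors) := by
    ext p
    simp only [Finset.mem_filter, Nat.mem_primeFactors, Finset.mem_insert]
    constructor
    · rintro ⟨⟨pp, -, -⟩, h5, hsq⟩
      by_cases hpq : p = q
      · exact Or.inl hpq
      · right
        have hc' := (keyB pp hpq).1.mp hsq
        have hpan : p ^ 2 ∣ α.natAbs := (keyA pp).1.mpr hc'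
        exact ⟨⟨pp, dvd_trans (dvd_pow_self p two_ne_zero) hpan, han0⟩, h5, hpan⟩
    · rintro (hpq | ⟨⟨pp, -, -⟩, h5, hsq⟩)
      · rw [hpq]
        refine ⟨⟨hq, ?_, hbn0⟩, hq5, ?_⟩
        · rw [hbn]
          exact Dvd.dvd.mul_left (Dvd.dvd.mul_right (dvd_pow_self q (by omega)) _) _
        · rw [hbn]
          exact Dvd.dvd.mul_left (Dvd.dvd.mul_right (pow_dvd_pow q he2) _) _
      · have hc' := (keyA pp).1.mp hsq
        have hpq : p ≠ q := fun h => hqsqc (h ▸ hc')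
        have hpbn : p ^ 2 ∣ β.natAbs := (keyB pp hpq).1.mpr hc'
        exact ⟨⟨pp, dvd_trans (dvd_pow_self p two_ne_zero) hpbn, hbn0⟩, h5, hpbn⟩
  have hvaleq : ∀ p ∈ Finset.filter (fun p => 5 ≤ p ∧ p ^ 2 ∣ α.natAbs) α.natAbs.primeFactors,
      padicValInt p β = padicValInt p α := by
    intro p hp
    simp only [Finset.mem_filter, Nat.mem_primeFactors] at hp
    obtain ⟨⟨pp, -, -⟩, -, hsq⟩ := hp
    have hc' := (keyA pp).1.mp hsq
    have hpc : p ∣ c.natAbs := dvd_trans (dvd_pow_self p two_ne_zero) hc'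
    have hpq : p ≠ q := fun h => hqc (h ▸ hpc)
    show padicValNat p β.natAbs = padicValNat p α.natAbs
    rw [(keyB pp hpq).2 hpc, (keyA pp).2 hpc]
  have hvq : padicValInt q β = e := by
    show padicValNat q β.natAbs = e
    rw [hbn, padicValNat.mul hcn0 hqeh0, padicValNat.mul hqe0 hhn0,
      padicValNat.prime_pow, padicValNat.eq_zero_of_not_dvd hqc,
      padicValNat.eq_zero_of_not_dvd hqh]
    omega
  have hFq : (if padicValInt q β % 4 = 2 then jacobiSym (-1) q
      else if padicValInt q β % 4 = 3 then jacobiSym 2 q else 1) = -1 := by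
    rw [hvq]
    rcases hmods with ⟨he4, hq4⟩ | ⟨he4, hq8⟩
    · rw [if_pos he4, jacobiSym.at_neg_one hqodd, ZMod.χ₄_nat_three_mod_four hq4]
    · have h1 : ¬ (e % 4 = 2) := by omega
      have h2 : ¬ (q % 2 = 0) := by omega
      have h3 : ¬ (q % 8 = 1 ∨ q % 8 = 7) := by omega
      rw [if_neg h1, if_pos he4, jacobiSym.at_two hqodd,
        ZMod.χ₈_nat_eq_if_mod_eight, if_neg h2, if_neg h3]
  have hPcong :
      (∏ p ∈ Finset.filter (fun p => 5 ≤ p ∧ p ^ 2 ∣ α.natAbs) α.natAbs.primeFactors,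
        (if padicValInt p β % 4 = 2 then jacobiSym (-1) p
          else if padicValInt p β % 4 = 3 then jacobiSym 2 p else 1)) =
      (∏ p ∈ Finset.filter (fun p => 5 ≤ p ∧ p ^ 2 ∣ α.natAbs) α.natAbs.primeFactors,
        (if padicValInt p α % 4 = 2 then jacobiSym (-1) p
          else if padicValInt p α % 4 = 3 then jacobiSym 2 p else 1)) :=
    Finset.prod_congr rfl (fun p hp => by rw [hvaleq p hp])
  simp only [Wquart]
  rw [hSet, Finset.prod_insert hqnotmem, hFq, hR, hPcong]
  ring
end

section
/- Let m, n be coprime integers and let p ≥ 5 be a prime dividing 27m⁶ + 16n⁶. Then −3 is a quadratic residue modulo p, i.e., the Legendre symbol (−3/p) equals 1. -/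
theorem legendre_neg_three_eq_one_of_dvd
    (m n : ℤ) (hmn : IsCoprime m n)
    (p : ℕ) [hp : Fact p.Prime] (hp5 : 5 ≤ p)
    (hdvd : (p : ℤ) ∣ 27 * m ^ 6 + 16 * n ^ 6) :
    legendreSym p (-3) = 1 := by
  have hpp := hp.out
  have h16 : (16 : ZMod p) ≠ 0 := by
    intro h
    have : p ∣ 16 := (ZMod.natCast_eq_zero_iff 16 p).1 (by exact_mod_cast h)
    have : p ∣ 2 := hpp.dvd_of_dvd_pow (n := 4) (by norm_num at this ⊢; exact this)
    have := Nat.le_of_dvd (by norm_num) this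
    omega
  have h3 : (3 : ZMod p) ≠ 0 := by
    intro h
    have : p ∣ 3 := (ZMod.natCast_eq_zero_iff 3 p).1 (by exact_mod_cast h)
    have := Nat.le_of_dvd (by norm_num) this
    omega
  have h0 : ((27 * m ^ 6 + 16 * n ^ 6 : ℤ) : ZMod p) = 0 :=
    (ZMod.intCast_zmod_eq_zero_iff_dvd _ p).2 hdvd
  set M : ZMod p := (m : ZMod p) with hM
  set N : ZMod p := (n : ZMod p) with hN
  have key : 16 * N ^ 6 = -(27 * M ^ 6) := by
    push_cast at h0
    linear_combination h0
  have hm : M ≠ 0 := by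
    intro h
    have hpm : (p : ℤ) ∣ m := (ZMod.intCast_zmod_eq_zero_iff_dvd m p).1 h
    have hN0 : N = 0 := by
      have : 16 * N ^ 6 = 0 := by rw [key, h]; ring
      rcases mul_eq_zero.1 this with h' | h'
      · exact absurd h' h16
      · exact pow_eq_zero_iff (by norm_num) |>.1 h'
    have hpn : (p : ℤ) ∣ n := (ZMod.intCast_zmod_eq_zero_iff_dvd n p).1 hN0
    have : IsUnit (p : ℤ) := hmn.isUnit_of_dvd' hpm hpn
    rw [Int.isUnit_iff] at this
    omega
  have h3M : (3 * M ^ 3 : ZMod p) ≠ 0 :=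
    mul_ne_zero h3 (pow_ne_zero _ hm)
  have hsq : IsSquare ((-3 : ℤ) : ZMod p) := by
    refine ⟨4 * N ^ 3 * (3 * M ^ 3)⁻¹, ?_⟩
    rw [show ((-3 : ℤ) : ZMod p) = -3 by push_cast; ring]
    field_simp
    linear_combination -key
  have hne : ((-3 : ℤ) : ZMod p) ≠ 0 := by
    push_cast
    intro h
    exact h3 (by linear_combination -h)
  exact (legendreSym.eq_one_iff p hne).2 hsq
end

section
/- Let F(x,y) ∈ ℤ[x,y] be a homogeneous binary form of degree 6 and let q be a prime such that the polynomial F(t,1) ∈ ℤ[t] has a simple root modulo q, i.e., there exists an integer r with q | F(r,1) and q ∤ F'(r,1), where F'(t,1) denotes the derivative of F(t,1) with respect to t. Then there exist an integer k ≥ 0 and coprime integers m, n with q ∤ n such that v_q(F(m,n)) = 2 + 6k. -/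
open MvPolynomial Polynomial

lemma eval_aeval_bridge (F : MvPolynomial (Fin 2) ℤ) (m : ℤ) :
    Polynomial.eval m (MvPolynomial.aeval ![Polynomial.X, 1] F) = MvPolynomial.eval ![m, 1] F := by
  induction F using MvPolynomial.induction_on with
  | C a => simp
  | add p q hp hq => simp [hp, hq]
  | mul_X p i hp => fin_cases i <;> simp [hp]

lemma solve_mod (q : ℕ) (hq : q.Prime) (a d c : ℤ) (hd : ¬ (q:ℤ) ∣ d) :
    ∃ t : ℤ, (q:ℤ) ∣ a + t * d - c := by
  haveI := Fact.mk hq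
  have hd' : (d : ZMod q) ≠ 0 := by rwa [Ne, ZMod.intCast_zmod_eq_zero_iff_dvd]
  obtain ⟨t, ht⟩ := ZMod.intCast_surjective ((((c - a : ℤ) : ZMod q)) * ((d : ℤ) : ZMod q)⁻¹)
  refine ⟨t, ?_⟩
  rw [← ZMod.intCast_zmod_eq_zero_iff_dvd]
  push_cast
  rw [ht, mul_assoc, inv_mul_cancel₀ hd']
  push_cast
  ring

theorem valuation_two_plus_six_k_of_simple_root
    (F : MvPolynomial (Fin 2) ℤ) (hF : F.IsHomogeneous 6)
    (q : ℕ) (hq : q.Prime) (r : ℤ)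
    (hroot : (q : ℤ) ∣ Polynomial.eval r (MvPolynomial.aeval ![Polynomial.X, 1] F))
    (hsimple : ¬ ((q : ℤ) ∣ Polynomial.eval r
        (Polynomial.derivative (MvPolynomial.aeval ![Polynomial.X, 1] F)))) :
    ∃ (k : ℕ) (m n : ℤ), IsCoprime m n ∧ ¬ ((q : ℤ) ∣ n) ∧
      padicValInt q (MvPolynomial.eval ![m, n] F) = 2 + 6 * k := by
  haveI := Fact.mk hq
  set f : Polynomial ℤ := MvPolynomial.aeval ![Polynomial.X, 1] F with hf
  have hder : ∀ m : ℤ, (q:ℤ) ∣ m - r → ¬ (q:ℤ) ∣ f.derivative.eval m := by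
    intro m hm hdm
    apply hsimple
    have h2 : (q:ℤ) ∣ f.derivative.eval m - f.derivative.eval r :=
      dvd_trans hm (Polynomial.sub_dvd_eval_sub m r f.derivative)
    simpa using dvd_sub hdm h2
  obtain ⟨a, ha⟩ := hroot
  obtain ⟨t, ht⟩ := solve_mod q hq a (f.derivative.eval r) 0 hsimple
  rw [sub_zero] at ht
  obtain ⟨w, hw⟩ := ht
  set m₁ : ℤ := r + t * q with hm₁
  obtain ⟨c, hc⟩ := f.binomExpansion r (t * q)
  have hb : f.eval m₁ = (q:ℤ)^2 * (w + c * t^2) := by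
    rw [hm₁, hc, ha]
    nlinarith [hw]
  have hd₁ : ¬ (q:ℤ) ∣ f.derivative.eval m₁ := hder m₁ (by simp [hm₁])
  obtain ⟨s, hs⟩ := solve_mod q hq (w + c * t^2) (f.derivative.eval m₁) 1 hd₁
  obtain ⟨e, he⟩ := hs
  obtain ⟨c₂, hc₂⟩ := f.binomExpansion m₁ (s * (q:ℤ)^2)
  set u : ℤ := 1 + q * e + c₂ * s^2 * (q:ℤ)^2 with hu
  have hm : f.eval (m₁ + s * (q:ℤ)^2) = (q:ℤ)^2 * u := by
    rw [hc₂, hb, hu]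
    nlinarith [he]
  have hqu : ¬ (q:ℤ) ∣ u := by
    intro hdv
    have h1 : (q:ℤ) ∣ 1 := by
      have : (q:ℤ) ∣ u - (q * e + c₂ * s^2 * (q:ℤ)^2) := by
        exact dvd_sub hdv ⟨e + c₂ * s^2 * q, by push_cast; ring⟩
      simpa [hu] using this
    have : q ∣ 1 := by exact_mod_cast h1
    exact hq.ne_one (Nat.dvd_one.mp this)
  have hu0 : u ≠ 0 := fun h => hqu (h ▸ dvd_zero _)
  refine ⟨0, m₁ + s * (q:ℤ)^2, 1, isCoprime_one_right, ?_, ?_⟩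
  · intro h
    have : q ∣ 1 := by exact_mod_cast h
    exact hq.ne_one (Nat.dvd_one.mp this)
  · rw [← eval_aeval_bridge, ← hf, hm, padicValInt.mul (pow_ne_zero _ (by exact_mod_cast hq.ne_zero)) hu0,
      padicValInt.eq_zero_of_not_dvd hqu]
    have : ((q:ℤ)^2) = ((q^2 : ℕ) : ℤ) := by push_cast; ring
    rw [this, padicValInt.of_nat, padicValNat.prime_pow]
end

section
/- Let a, b be nonzero coprime integers with 3 ∤ a and 3 ∤ b. Then there are infinitely many pairs of coprime integers (m,n) such that R(3a²m⁶ + b²n⁶) = 1. -/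
lemma v2_pow_mul (k : ℕ) (u : ℤ) (hu : ¬ (2:ℤ) ∣ u) : v2 (2 ^ k * u) = k := by
  have hu0 : u ≠ 0 := by rintro rfl; exact hu ⟨0, by ring⟩
  have h2 : ((2:ℤ)^k) ≠ 0 := by positivity
  unfold v2
  rw [padicValInt.mul h2 hu0, padicValInt.eq_zero_of_not_dvd hu]
  have h : ((2:ℤ)^k) = ((2^k : ℕ) : ℤ) := by push_cast; ring
  rw [h, padicValInt.of_nat, padicValNat.prime_pow]
  omega

lemma part2_pow_mul (k : ℕ) (u : ℤ) (hu : ¬ (2:ℤ) ∣ u) : part2 (2 ^ k * u) = u := by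
  unfold part2
  rw [v2_pow_mul k u hu, Int.mul_ediv_cancel_left _ (by positivity)]

lemma v3_pow_mul (k : ℕ) (u : ℤ) (hu : ¬ (3:ℤ) ∣ u) : v3 (3 ^ k * u) = k := by
  have hu0 : u ≠ 0 := by rintro rfl; exact hu ⟨0, by ring⟩
  have h3 : ((3:ℤ)^k) ≠ 0 := by positivity
  unfold v3
  rw [padicValInt.mul h3 hu0, padicValInt.eq_zero_of_not_dvd hu]
  have h : ((3:ℤ)^k) = ((3^k : ℕ) : ℤ) := by push_cast; ring
  rw [h, padicValInt.of_nat, padicValNat.prime_pow]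
  omega

lemma part3_pow_mul (k : ℕ) (u : ℤ) (hu : ¬ (3:ℤ) ∣ u) : part3 (3 ^ k * u) = u := by
  unfold part3
  rw [v3_pow_mul k u hu, Int.mul_ediv_cancel_left _ (by positivity)]

theorem infinitely_many_coprime_pairs_with_R_eq_one
    (a b : ℤ) (ha : a ≠ 0) (hb : b ≠ 0) (hab : Int.gcd a b = 1)
    (h3a : ¬ ((3 : ℤ) ∣ a)) (h3b : ¬ ((3 : ℤ) ∣ b)) :
    {mn : ℤ × ℤ | Int.gcd mn.1 mn.2 = 1 ∧
      Rsix (3 * a ^ 2 * mn.1 ^ 6 + b ^ 2 * mn.2 ^ 6) = 1}.Infinite := by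
  -- write a = 2^v * a' with a' odd
  obtain ⟨a', haa, h2a'⟩ :=
    ((Int.finiteMultiplicity_iff (a := 2) (b := a)).mpr
      ⟨by norm_num, ha⟩).exists_eq_pow_mul_and_not_dvd
  set v : ℕ := multiplicity (2:ℤ) a with hv
  -- the family k ↦ (1, 6^(v+1) * k)
  refine Set.infinite_of_injective_forall_mem
    (f := fun k : ℤ => ((1 : ℤ), (2:ℤ)^(v+1) * 3^(v+1) * k)) ?_ fun k => ?_
  · intro x y hxy
    have h6 : ((2:ℤ)^(v+1) * 3^(v+1)) ≠ 0 := by positivity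
    have := (Prod.ext_iff.mp hxy).2
    exact mul_left_cancel₀ h6 this
  simp only [Set.mem_setOf_eq]
  refine ⟨by simp [Int.gcd], ?_⟩
  -- the value α
  set α : ℤ := 3 * a ^ 2 * (1:ℤ) ^ 6 + b ^ 2 * ((2:ℤ)^(v+1) * 3^(v+1) * k) ^ 6 with hα
  -- 2-adic analysis
  set u : ℤ := 3*a'^2 + 2^(4*v+6)*3^(6*v+6)*b^2*k^6 with hu
  have hα2 : α = 2 ^ (2*v) * u := by rw [hα, hu, haa]; ring
  obtain ⟨t, ht⟩ : ∃ t, a' = 2*t + 1 := ⟨(a'-1)/2, by omega⟩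
  have hu4 : u = 4*(3*t^2 + 3*t + 2^(4*v+4)*3^(6*v+6)*b^2*k^6) + 3 := by
    rw [hu, ht]; ring
  have hu2 : ¬ (2:ℤ) ∣ u := by omega
  have e2 : v2 α = 2*v := by rw [hα2]; exact v2_pow_mul _ _ hu2
  have ep2 : part2 α = u := by rw [hα2]; exact part2_pow_mul _ _ hu2
  -- 3-adic analysis
  set w : ℤ := a^2 + 2^(6*v+6)*3^(6*v+5)*b^2*k^6 with hw
  have hα3 : α = 3 ^ 1 * w := by rw [hα, hw]; ring
  obtain ⟨s, hs⟩ : ∃ s, a = 3*s + 1 ∨ a = 3*s + 2 := ⟨a/3, by omega⟩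
  have hw3 : w % 3 = 1 := by
    rcases hs with hs | hs
    · have : w = 3*(3*s^2 + 2*s + 2^(6*v+6)*3^(6*v+4)*b^2*k^6) + 1 := by
        rw [hw, hs]; ring
      omega
    · have : w = 3*(3*s^2 + 4*s + 1 + 2^(6*v+6)*3^(6*v+4)*b^2*k^6) + 1 := by
        rw [hw, hs]; ring
      omega
  have hw3' : ¬ (3:ℤ) ∣ w := by omega
  have e3 : v3 α = 1 := by rw [hα3]; exact v3_pow_mul _ _ hw3'
  have ep3 : part3 α = w := by rw [hα3]; exact part3_pow_mul _ _ hw3'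
  -- compute Rsix
  have h2v : 2*v % 6 = 0 ∨ 2*v % 6 = 2 ∨ 2*v % 6 = 4 := by omega
  have hW2 : W2six α = -1 := by
    unfold W2six
    rw [e2, ep2]
    rcases h2v with h | h | h
    · rw [if_pos (Or.inl (Or.inl h))]
    · rw [if_pos (Or.inl (Or.inr h))]
    · rw [if_pos (Or.inr ⟨Or.inr (Or.inr (Or.inl h)), by omega⟩)]
  have hchi : chi4 (part2 α) = -1 := by
    unfold chi4
    rw [ep2, if_neg (by omega)]
  have hW3 : W3six α = -1 := by
    unfold W3six
    rw [e3, ep3, if_pos (Or.inl ⟨Or.inl rfl, hw3⟩)]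
  show Rsix α = 1
  unfold Rsix
  rw [hW2, hchi, hW3, e3]
  norm_num
end

section
/- The rational points of the affine hypersurface w² = z³ + 27x⁶ + 16y⁶ are Zariski dense in it: every polynomial g ∈ ℚ[x,y,z,w] that vanishes at all rational solutions (x,y,z,w) ∈ ℚ⁴ of the equation w² = z³ + 27x⁶ + 16y⁶ is divisible in ℚ[x,y,z,w] by the polynomial w² − z³ − 27x⁶ − 16y⁶. -/
open MvPolynomial

/-- The defining polynomial `w² − z³ − 27x⁶ − 16y⁶` in `ℚ[x,y,z,w]`, with variables
`x = X 0`, `y = X 1`, `z = X 2`, `w = X 3`. -/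
noncomputable def defPoly : MvPolynomial (Fin 4) ℚ :=
  X 3 ^ 2 - X 2 ^ 3 - 27 * X 0 ^ 6 - 16 * X 1 ^ 6

/-! ### 2-adic valuation helpers -/

local notation "v2" => padicValRat 2

private lemma val_odd_int (a : ℤ) (ha : Odd a) : v2 (a : ℚ) = 0 := by
  rw [padicValRat.of_int]
  have h : ¬ ((2:ℤ) ∣ a) := by rcases ha with ⟨k, rfl⟩; omega
  exact_mod_cast padicValInt.eq_zero_of_not_dvd (by exact_mod_cast h)

private lemma val_two_pow (k : ℕ) : v2 ((2:ℚ)^k) = k := by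
  have h2 : ((2:ℚ)) = ((2:ℕ):ℚ) := by norm_num
  rw [padicValRat.pow _, h2, padicValRat.self (by norm_num)]
  ring

private lemma val_add_left {q r : ℚ} (hq : q ≠ 0) (hr : r ≠ 0) (h : v2 q < v2 r) :
    q + r ≠ 0 ∧ v2 (q + r) = v2 q := by
  have hqr : q + r ≠ 0 := by
    intro hz
    have hrq : r = -q := by linarith
    rw [hrq, padicValRat.neg] at h
    exact lt_irrefl _ h
  exact ⟨hqr, by rw [padicValRat.add_eq_min hqr hq hr (ne_of_lt h), min_eq_left h.le]⟩

/-! ### A sequence of rational points on `w² = z³ + 27m⁶ + 16` -/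

/-- The constant `c = 27 m⁶ + 16`. -/
noncomputable def cc (m : ℤ) : ℚ := 27*(m:ℚ)^6 + 16

/-- Sequence of points on `w² = z³ + cc m`, starting from `(-3m², 4)`, via duplication. -/
noncomputable def pt (m : ℤ) : ℕ → ℚ × ℚ
  | 0 => (-3*(m:ℚ)^2, 4)
  | n+1 =>
      let p := pt m n
      let z' := (p.1^4 - 8*(cc m)*p.1)/(4*p.2^2)
      (z', (3*p.1^2/(2*p.2))*(p.1 - z') - p.2)

private lemma cc_odd (m : ℤ) (hm : Odd m) : Odd (27*m^6 + 16) :=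
  ((by decide : Odd (27:ℤ)).mul (hm.pow)).add_even (by decide)

private lemma cc_val (m : ℤ) (hm : Odd m) : v2 (cc m) = 0 := by
  have : cc m = ((27*m^6 + 16 : ℤ) : ℚ) := by unfold cc; push_cast; ring
  rw [this]; exact val_odd_int _ (cc_odd m hm)

private lemma cc_pos (m : ℤ) : 0 < cc m := by
  unfold cc; positivity

/-- Duplication identity for `w² = z³ + c`. -/
private lemma dup_id (z w c : ℚ) (hw : w ≠ 0) (h : w^2 = z^3 + c) :
    ((3*z^2/(2*w)) * (z - (z^4 - 8*c*z)/(4*w^2)) - w)^2 = ((z^4 - 8*c*z)/(4*w^2))^3 + c := by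
  have hc : c = w^2 - z^3 := by linarith
  subst hc; field_simp; ring

/-- Key invariant of the sequence of points. -/
private lemma pt_inv (m : ℤ) (hm : Odd m) (n : ℕ) :
    (pt m (n+1)).2^2 = (pt m (n+1)).1^3 + cc m ∧
    (pt m (n+1)).1 ≠ 0 ∧ (pt m (n+1)).2 ≠ 0 ∧
    v2 (pt m (n+1)).1 = -(2*(n:ℤ)+6) := by
  have hm0 : (m:ℚ) ≠ 0 := by
    intro h; rcases hm with ⟨k, hk⟩
    have : m = 0 := by exact_mod_cast h
    omega
  induction n with
  | zero =>
    have hz1 : (pt m 1).1 = ((3*m^2*(243*m^6+128) : ℤ) : ℚ) / 2^6 := by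
      show ((-3*(m:ℚ)^2)^4 - 8*(cc m)*(-3*(m:ℚ)^2))/(4*(4:ℚ)^2) = _
      unfold cc; push_cast; ring
    have hodd : Odd (3*m^2*(243*m^6+128)) :=
      ((by decide : Odd (3:ℤ)).mul (hm.pow)).mul
        (((by decide : Odd (243:ℤ)).mul (hm.pow)).add_even (by decide))
    have hnum : ((3*m^2*(243*m^6+128) : ℤ) : ℚ) ≠ 0 := by
      intro h
      have h2 : (3*m^2*(243*m^6+128) : ℤ) = 0 := by exact_mod_cast h
      rcases hodd with ⟨k, hk⟩; omega
    have hz1ne : (pt m 1).1 ≠ 0 := by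
      rw [hz1]; positivity
    have hz1v : v2 (pt m 1).1 = -6 := by
      rw [hz1, padicValRat.div hnum (by positivity), val_odd_int _ hodd, val_two_pow]
      norm_num
    have hw0 : (pt m 0).2 = 4 := rfl
    have hrel0 : (pt m 0).2^2 = (pt m 0).1^3 + cc m := by
      show (4:ℚ)^2 = (-3*(m:ℚ)^2)^3 + cc m
      unfold cc; ring
    have hrel1 : (pt m 1).2^2 = (pt m 1).1^3 + cc m :=
      dup_id _ _ _ (by rw [hw0]; norm_num) hrel0
    have hw1 : (pt m 1).2 ≠ 0 := by
      intro h
      rw [h] at hrel1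
      have h3 : (pt m 1).1^3 = -(cc m) := by linarith [hrel1.symm]
      have : v2 ((pt m 1).1^3) = v2 (cc m) := by rw [h3, padicValRat.neg]
      rw [padicValRat.pow _, hz1v, cc_val m hm] at this
      norm_num at this
    exact ⟨hrel1, hz1ne, hw1, by rw [hz1v]; norm_num⟩
  | succ n ih =>
    obtain ⟨hrel, hzne, hwne, hzv⟩ := ih
    set z := (pt m (n+1)).1
    set w := (pt m (n+1)).2
    set c := cc m with hcdef
    have hcne : c ≠ 0 := ne_of_gt (cc_pos m)
    have hcv : v2 c = 0 := cc_val m hm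
    have hz' : (pt m (n+2)).1 = (z^4 - 8*c*z)/(4*w^2) := rfl
    have hw' : (pt m (n+2)).2 = (3*z^2/(2*w))*(z - (z^4 - 8*c*z)/(4*w^2)) - w := rfl
    have hz4 : v2 (z^4) = -(8*(n:ℤ))-24 := by rw [padicValRat.pow _, hzv]; ring
    have h8cz : (-(8*c*z)) ≠ 0 := by simp [hcne, hzne]
    have h8czv : v2 (-(8*c*z)) = -(2*(n:ℤ))-3 := by
      rw [padicValRat.neg, padicValRat.mul (by simp [hcne]) hzne,
          padicValRat.mul (by norm_num) hcne, hcv, hzv]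
      have h8 : v2 (8:ℚ) = 3 := by
        have : (8:ℚ) = 2^3 := by norm_num
        rw [this, val_two_pow 3]; norm_num
      rw [h8]; ring
    have hnumlt : v2 (z^4) < v2 (-(8*c*z)) := by rw [hz4, h8czv]; push_cast; linarith
    obtain ⟨hnumne, hnumv⟩ := val_add_left (pow_ne_zero 4 hzne) h8cz hnumlt
    have hnum_eq : z^4 - 8*c*z = z^4 + -(8*c*z) := by ring
    have hz3 : v2 (z^3) = -(6*(n:ℤ))-18 := by rw [padicValRat.pow _, hzv]; ring
    have hz3lt : v2 (z^3) < v2 c := by rw [hz3, hcv]; push_cast; linarith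
    obtain ⟨hz3cne, hz3cv⟩ := val_add_left (pow_ne_zero 3 hzne) hcne hz3lt
    have hwv : 2 * v2 w = -(6*(n:ℤ))-18 := by
      have : v2 (w^2) = v2 (z^3 + c) := by rw [hrel]
      rw [padicValRat.pow _, hz3cv, hz3] at this
      exact_mod_cast this
    have h4w2ne : (4*w^2 : ℚ) ≠ 0 := by simp [hwne]
    have hz'v : v2 (pt m (n+2)).1 = -(2*(n:ℤ))-8 := by
      rw [hz', hnum_eq, padicValRat.div hnumne h4w2ne, hnumv, hz4,
          padicValRat.mul (by norm_num) (pow_ne_zero 2 hwne), padicValRat.pow _]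
      have h4 : v2 (4:ℚ) = 2 := by
        have : (4:ℚ) = 2^2 := by norm_num
        rw [this, val_two_pow 2]; norm_num
      rw [h4]
      push_cast
      linarith [hwv]
    have hz'ne : (pt m (n+2)).1 ≠ 0 := by
      rw [hz', hnum_eq]; exact div_ne_zero hnumne h4w2ne
    have hrel' : (pt m (n+2)).2^2 = (pt m (n+2)).1^3 + c := by
      rw [hz', hw']; exact dup_id z w c hwne hrel
    have hw'ne : (pt m (n+2)).2 ≠ 0 := by
      intro h
      rw [h] at hrel'
      have h3 : (pt m (n+2)).1^3 = -c := by linarith [hrel'.symm]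
      have : v2 ((pt m (n+2)).1^3) = v2 c := by rw [h3, padicValRat.neg]
      rw [padicValRat.pow _, hz'v, hcv] at this
      push_cast at this; linarith
    refine ⟨hrel', hz'ne, hw'ne, ?_⟩
    rw [hz'v]; push_cast; ring

/-- `z`-coordinates of the sequence of points. -/
noncomputable def Zs (m : ℤ) (n : ℕ) : ℚ := (pt m (n+1)).1

/-- `w`-coordinates of the sequence of points. -/
noncomputable def Ws (m : ℤ) (n : ℕ) : ℚ := (pt m (n+1)).2

private lemma Zs_inj (m : ℤ) (hm : Odd m) : Function.Injective (Zs m) := by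
  intro a b hab
  have ha := (pt_inv m hm a).2.2.2
  have hb := (pt_inv m hm b).2.2.2
  rw [show Zs m a = (pt m (a+1)).1 from rfl] at hab
  rw [show Zs m b = (pt m (b+1)).1 from rfl] at hab
  rw [hab, hb] at ha
  omega

/-! ### Density lemma in three variables -/

private lemma eval_aeval3 (f : MvPolynomial (Fin 3) ℚ) (g : Fin 3 → Polynomial ℚ) (t : ℚ) :
    Polynomial.eval t (MvPolynomial.aeval g f) =
      MvPolynomial.eval (fun j => Polynomial.eval t (g j)) f := by
  induction f using MvPolynomial.induction_on with
  | C a => simp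
  | add p q hp hq => simp [hp, hq]
  | mul_X p i hp => simp [hp]

/-- If a polynomial in three variables vanishes on all the points
`(λ, λ² Zₙ(m), λ m)` of our family, it is zero. -/
private lemma dense3 (f : MvPolynomial (Fin 3) ℚ)
    (h : ∀ lam : ℚ, lam ≠ 0 → ∀ m : ℤ, Odd m → ∀ n : ℕ,
      MvPolynomial.eval ![lam, lam^2 * Zs m n, lam * (m:ℚ)] f = 0) : f = 0 := by
  have h1 : ∀ lam : ℚ, lam ≠ 0 → ∀ m : ℤ, Odd m → ∀ t : ℚ,
      MvPolynomial.eval ![lam, t, lam * (m:ℚ)] f = 0 := by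
    intro lam hlam m hm t
    set Q : Polynomial ℚ :=
      MvPolynomial.aeval ![Polynomial.C lam, Polynomial.X, Polynomial.C (lam * (m:ℚ))] f with hQdef
    have hroot : ∀ s : ℚ, Q.eval s = MvPolynomial.eval ![lam, s, lam*(m:ℚ)] f := by
      intro s
      have hvec : (fun j => Polynomial.eval s
          ((![Polynomial.C lam, Polynomial.X, Polynomial.C (lam * (m:ℚ))] : Fin 3 → Polynomial ℚ) j))
          = ![lam, s, lam*(m:ℚ)] := by
        funext j; fin_cases j <;> simp
      rw [hQdef, eval_aeval3, hvec]
    have hQ0 : Q = 0 := by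
      apply Polynomial.eq_zero_of_infinite_isRoot
      apply Set.infinite_of_injective_forall_mem (f := fun n : ℕ => lam^2 * Zs m n)
      · intro a b hab
        exact Zs_inj m hm (mul_left_cancel₀ (pow_ne_zero 2 hlam) hab)
      · intro n
        show Q.IsRoot _
        rw [Polynomial.IsRoot, hroot]
        exact h lam hlam m hm n
    have := hroot t
    rw [hQ0] at this
    simpa using this.symm
  have h2 : ∀ lam : ℚ, lam ≠ 0 → ∀ t s : ℚ,
      MvPolynomial.eval ![lam, t, s] f = 0 := by
    intro lam hlam t s
    set Q : Polynomial ℚ :=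
      MvPolynomial.aeval ![Polynomial.C lam, Polynomial.C t, Polynomial.X] f with hQdef
    have hroot : ∀ s : ℚ, Q.eval s = MvPolynomial.eval ![lam, t, s] f := by
      intro s
      have hvec : (fun j => Polynomial.eval s
          ((![Polynomial.C lam, Polynomial.C t, Polynomial.X] : Fin 3 → Polynomial ℚ) j))
          = ![lam, t, s] := by
        funext j; fin_cases j <;> simp
      rw [hQdef, eval_aeval3, hvec]
    have hQ0 : Q = 0 := by
      apply Polynomial.eq_zero_of_infinite_isRoot
      apply Set.infinite_of_injective_forall_mem
        (f := fun n : ℕ => lam * (((2*(n:ℤ)+1 : ℤ)):ℚ))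
      · intro a b hab
        have hab' : lam * ((2*(a:ℤ)+1 : ℤ):ℚ) = lam * ((2*(b:ℤ)+1 : ℤ):ℚ) := hab
        have hab'' := mul_left_cancel₀ hlam hab'
        have hab''' : (2*(a:ℤ)+1) = (2*(b:ℤ)+1) := by exact_mod_cast hab''
        omega
      · intro n
        show Q.IsRoot _
        rw [Polynomial.IsRoot, hroot]
        exact h1 lam hlam (2*(n:ℤ)+1) ⟨n, by ring⟩ _
    have := hroot s
    rw [hQ0] at this
    simpa using this.symm
  have h3 : ∀ y t s : ℚ, MvPolynomial.eval ![y, t, s] f = 0 := by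
    intro y t s
    set Q : Polynomial ℚ :=
      MvPolynomial.aeval ![Polynomial.X, Polynomial.C t, Polynomial.C s] f with hQdef
    have hroot : ∀ u : ℚ, Q.eval u = MvPolynomial.eval ![u, t, s] f := by
      intro u
      have hvec : (fun j => Polynomial.eval u
          ((![Polynomial.X, Polynomial.C t, Polynomial.C s] : Fin 3 → Polynomial ℚ) j))
          = ![u, t, s] := by
        funext j; fin_cases j <;> simp
      rw [hQdef, eval_aeval3, hvec]
    have hQ0 : Q = 0 := by
      apply Polynomial.eq_zero_of_infinite_isRoot
      apply Set.infinite_of_injective_forall_mem (f := fun n : ℕ => ((n:ℚ)+1))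
      · intro a b hab
        have hab' : (a:ℚ) + 1 = (b:ℚ) + 1 := hab
        have hab'' : (a:ℚ) = (b:ℚ) := by linarith
        exact_mod_cast hab''
      · intro n
        show Q.IsRoot _
        rw [Polynomial.IsRoot, hroot]
        exact h2 _ (by positivity) t s
    have := hroot y
    rw [hQ0] at this
    simpa using this.symm
  apply MvPolynomial.funext
  intro x
  have hx : x = ![x 0, x 1, x 2] := by
    funext i; fin_cases i <;> rfl
  rw [map_zero, hx]
  exact h3 _ _ _

/-! ### Change of variables -/

/-- The polynomial `z³ + 27x⁶ + 16y⁶` after the change of variables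
(`X 0 = y`, `X 1 = z`, `X 2 = x`). -/
noncomputable def cpoly : MvPolynomial (Fin 3) ℚ := X 1 ^ 3 + 27 * X 2 ^ 6 + 16 * X 0 ^ 6

/-- The variable swap `x ↔ w`. -/
noncomputable def sig : Fin 4 ≃ Fin 4 := Equiv.swap 0 3

/-- The change of variables isolating `w`. -/
noncomputable def Ee : MvPolynomial (Fin 4) ℚ ≃ₐ[ℚ] Polynomial (MvPolynomial (Fin 3) ℚ) :=
  (renameEquiv ℚ sig).trans (finSuccEquiv ℚ 3)

private lemma hP : Ee defPoly = Polynomial.X ^ 2 - Polynomial.C cpoly := by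
  have e0 : sig 0 = 3 := Equiv.swap_apply_left _ _
  have e1 : sig 1 = 1 := Equiv.swap_apply_of_ne_of_ne (by decide) (by decide)
  have e2 : sig 2 = 2 := Equiv.swap_apply_of_ne_of_ne (by decide) (by decide)
  have e3 : sig 3 = 0 := Equiv.swap_apply_right _ _
  have h1 : (1 : Fin 4) = Fin.succ 0 := rfl
  have h2 : (2 : Fin 4) = Fin.succ 1 := rfl
  have h3 : (3 : Fin 4) = Fin.succ 2 := rfl
  show (finSuccEquiv ℚ 3) (rename sig defPoly) = _
  rw [defPoly, cpoly]
  simp only [map_sub, map_add, map_mul, map_pow, map_ofNat, rename_X, e0, e1, e2, e3]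
  simp only [h1, h2, h3, finSuccEquiv_X_zero, finSuccEquiv_X_succ]
  ring

private lemma bridge (f : MvPolynomial (Fin 4) ℚ) (v : Fin 4 → ℚ) :
    MvPolynomial.eval v f =
      Polynomial.eval (v 3)
        (Polynomial.map (MvPolynomial.eval ![v 1, v 2, v 0]) (Ee f)) := by
  have e0 : sig 0 = 3 := Equiv.swap_apply_left _ _
  have e1 : sig 1 = 1 := Equiv.swap_apply_of_ne_of_ne (by decide) (by decide)
  have e2 : sig 2 = 2 := Equiv.swap_apply_of_ne_of_ne (by decide) (by decide)
  have e3 : sig 3 = 0 := Equiv.swap_apply_right _ _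
  have hv : v = (Fin.cons (v 3) ![v 1, v 2, v 0] : Fin 4 → ℚ) ∘ sig := by
    funext i
    fin_cases i <;> simp [sig, Equiv.swap_apply_def, Fin.cons] <;> rfl
  conv_lhs => rw [hv]
  rw [← eval_rename]
  exact eval_eq_eval_mv_eval' _ _ _

theorem rational_points_zariski_dense :
    ∀ g : MvPolynomial (Fin 4) ℚ,
      (∀ v : Fin 4 → ℚ, MvPolynomial.eval v defPoly = 0 → MvPolynomial.eval v g = 0) →
      defPoly ∣ g := by
  intro g hg
  set P : Polynomial (MvPolynomial (Fin 3) ℚ) := Ee defPoly with hPdef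
  set G : Polynomial (MvPolynomial (Fin 3) ℚ) := Ee g with hGdef
  have hMonic : P.Monic := by
    rw [hPdef, hP]; exact Polynomial.monic_X_pow_sub_C _ (by norm_num)
  have hdeg : P.degree = 2 := by
    rw [hPdef, hP]; exact Polynomial.degree_X_pow_sub_C (by norm_num) _
  set r : Polynomial (MvPolynomial (Fin 3) ℚ) := G %ₘ P with hrdef
  have hGr : G = P * (G /ₘ P) + r := by
    conv_lhs => rw [← Polynomial.modByMonic_add_div G P]
    ring
  have hrdeg : r.degree < 2 := hdeg ▸ Polynomial.degree_modByMonic_lt G hMonic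
  have hrle : r.degree ≤ 1 := by
    by_cases hr0 : r = 0
    · simp [hr0]
    · rw [Polynomial.degree_eq_natDegree hr0] at hrdeg ⊢
      have : r.natDegree < 2 := by exact_mod_cast hrdeg
      exact_mod_cast Nat.lt_succ_iff.mp this
  have hr_eq : r = Polynomial.C (r.coeff 1) * Polynomial.X + Polynomial.C (r.coeff 0) :=
    Polynomial.eq_X_add_C_of_degree_le_one hrle
  -- evaluation on the family of points
  have key : ∀ lam : ℚ, lam ≠ 0 → ∀ m : ℤ, Odd m → ∀ n : ℕ,
      MvPolynomial.eval ![lam, lam^2 * Zs m n, lam * (m:ℚ)] (r.coeff 0) = 0 ∧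
      MvPolynomial.eval ![lam, lam^2 * Zs m n, lam * (m:ℚ)] (r.coeff 1) = 0 := by
    intro lam hlam m hm n
    obtain ⟨hrel, hzne, hwne, _⟩ := pt_inv m hm n
    set Z := Zs m n with hZ
    set W := Ws m n with hW
    have hrelZW : W^2 = Z^3 + cc m := hrel
    set u : Fin 3 → ℚ := ![lam, lam^2 * Z, lam * (m:ℚ)] with hu
    have hcp : MvPolynomial.eval u cpoly = (lam^3*W)^2 := by
      rw [cpoly]
      simp only [map_add, map_mul, map_pow, map_ofNat, MvPolynomial.eval_X]
      have h0 : u 0 = lam := rfl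
      have h1 : u 1 = lam^2 * Z := rfl
      have h2 : u 2 = lam * (m:ℚ) := rfl
      rw [h0, h1, h2]
      have hcc := hrelZW
      rw [cc] at hcc
      linear_combination (-(lam^6)) * hcc
    -- the two points
    have main : ∀ w0 : ℚ, w0^2 = (lam^3*W)^2 →
        MvPolynomial.eval u (r.coeff 0) + MvPolynomial.eval u (r.coeff 1) * w0 = 0 := by
      intro w0 hw0
      have hpt : MvPolynomial.eval ![lam*(m:ℚ), lam, lam^2*Z, w0] defPoly = 0 := by
        rw [defPoly]
        have hc := hrelZW
        rw [cc] at hc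
        simp only [map_sub, map_mul, map_pow, map_ofNat, MvPolynomial.eval_X,
          Matrix.cons_val_zero, Matrix.cons_val_one, Matrix.head_cons,
          Matrix.cons_val_two, Matrix.cons_val_three, Matrix.tail_cons]
        linear_combination hw0 + lam^6 * hc
      have hgv := hg _ hpt
      rw [bridge] at hgv
      have hv3 : (![lam*(m:ℚ), lam, lam^2*Z, w0] : Fin 4 → ℚ) 3 = w0 := rfl
      have hvu : (![(![lam*(m:ℚ), lam, lam^2*Z, w0] : Fin 4 → ℚ) 1,
          (![lam*(m:ℚ), lam, lam^2*Z, w0] : Fin 4 → ℚ) 2,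
          (![lam*(m:ℚ), lam, lam^2*Z, w0] : Fin 4 → ℚ) 0] : Fin 3 → ℚ) = u := by
        funext j; fin_cases j <;> rfl
      rw [hv3, hvu, ← hGdef] at hgv
      rw [hGr, Polynomial.map_add, Polynomial.map_mul, Polynomial.eval_add,
        Polynomial.eval_mul] at hgv
      rw [hPdef, hP] at hgv
      simp only [Polynomial.map_sub, Polynomial.map_pow, Polynomial.map_X, Polynomial.map_C,
        Polynomial.eval_sub, Polynomial.eval_pow, Polynomial.eval_X, Polynomial.eval_C] at hgv
      rw [hcp] at hgv
      rw [hw0, sub_self, zero_mul, zero_add] at hgv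
      conv_lhs at hgv => rw [hr_eq]
      simp only [Polynomial.map_add, Polynomial.map_mul, Polynomial.map_C, Polynomial.map_X,
        Polynomial.eval_add, Polynomial.eval_mul, Polynomial.eval_C, Polynomial.eval_X] at hgv
      linarith [hgv]
    have hWne : (lam^3*W : ℚ) ≠ 0 := by
      apply mul_ne_zero (pow_ne_zero 3 hlam) hwne
    have hplus := main (lam^3*W) rfl
    have hminus := main (-(lam^3*W)) (by ring)
    constructor
    · linarith [hplus, hminus]
    · have : MvPolynomial.eval u (r.coeff 1) * (lam^3*W) = 0 := by linarith [hplus, hminus]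
      rcases mul_eq_zero.mp this with h | h
      · exact h
      · exact absurd h hWne
  have hc0 : r.coeff 0 = 0 := dense3 _ (fun lam hlam m hm n => (key lam hlam m hm n).1)
  have hc1 : r.coeff 1 = 0 := dense3 _ (fun lam hlam m hm n => (key lam hlam m hm n).2)
  have hr0 : r = 0 := by rw [hr_eq, hc0, hc1]; simp
  have hdvd : P ∣ G := ⟨G /ₘ P, by conv_lhs => rw [hGr, hr0, add_zero]⟩
  obtain ⟨q', hq'⟩ := hdvd
  refine ⟨Ee.symm q', ?_⟩
  have hfin := congrArg Ee.symm hq'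
  rw [map_mul, hGdef, hPdef] at hfin
  simpa using hfin
end
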